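/- arXiv:math-ph/0411018 — 7 statements merged into one kernel-verified Lean document; each statement's English description precedes it below -/
import Mathlib

section
/- For every phase-space point z ∈ ℝ^{2n}, every integer 1 ≤ j ≤ n, and all indices 1 ≤ r ≤ s ≤ n with s − r < n − j, the (r,s) entry of the matrix L(z)^j − L̄(z)^j equals 0 (and by symmetry so does the (s,r) entry). In other words, L^j − L̄^j has (n − j) consecutive zero diagonals on and above the main diagonal. -/
open Matrix BigOperators

noncomputable def bfun {n : ℕ} [NeZero n] (z : (Fin n → ℝ) × (Fin n → ℝ)) (j : Fin n) : ℝ :=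
  Real.exp ((z.1 j - z.1 (j + 1)) / 2)

/-- The Lax matrix `L`. -/
noncomputable def Lax {n : ℕ} [NeZero n] (z : (Fin n → ℝ) × (Fin n → ℝ)) :
    Matrix (Fin n) (Fin n) ℝ := fun r s =>
  (if r = s then z.2 r else 0) + (if r + 1 = s then bfun z r else 0) +
    (if s + 1 = r then bfun z s else 0)

/-- The sign `σ_r`, equal to `-1` for the index corresponding to `b_n`. -/
noncomputable def sgn {n : ℕ} [NeZero n] (j : Fin n) : ℝ := if j + 1 = 0 then -1 else 1

/-- The Lax matrix `L̄` obtained from `L` by `b_n ↦ -b_n`. -/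
noncomputable def LaxBar {n : ℕ} [NeZero n] (z : (Fin n → ℝ) × (Fin n → ℝ)) :
    Matrix (Fin n) (Fin n) ℝ := fun r s =>
  (if r = s then z.2 r else 0) + (if r + 1 = s then sgn r * bfun z r else 0) +
    (if s + 1 = r then sgn s * bfun z s else 0)

/-- The canonical Poisson bracket on `ℝ^{2n}`. -/
noncomputable def pb {n : ℕ} (f g : (Fin n → ℝ) × (Fin n → ℝ) → ℝ)
    (z : (Fin n → ℝ) × (Fin n → ℝ)) : ℝ :=
  ∑ j : Fin n,
    (fderiv ℝ f z (Pi.single j 1, 0) * fderiv ℝ g z (0, Pi.single j 1) -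
     fderiv ℝ f z (0, Pi.single j 1) * fderiv ℝ g z (Pi.single j 1, 0))

/-- The integrals of motion `F_j = (1/j) Tr L^j`. -/
noncomputable def F {n : ℕ} [NeZero n] (j : ℕ) (z : (Fin n → ℝ) × (Fin n → ℝ)) : ℝ :=
  (1 / j : ℝ) * (Lax z ^ j).trace

/-- The map `F = (F_1, …, F_n) : ℝ^{2n} → ℝ^n`. -/
noncomputable def Fvec {n : ℕ} [NeZero n] (z : (Fin n → ℝ) × (Fin n → ℝ)) : Fin n → ℝ :=
  fun j => F (j.val + 1) z

/-- The corank of `dF(z)`. -/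
noncomputable def corank (n : ℕ) [NeZero n] (z : (Fin n → ℝ) × (Fin n → ℝ)) : ℕ :=
  n - Module.finrank ℝ (LinearMap.range (fderiv ℝ (Fvec (n := n)) z).toLinearMap)

/-- Number of (real) eigenvalues of `A` with two-dimensional eigenspace. -/
noncomputable def nuCount {n : ℕ} (A : Matrix (Fin n) (Fin n) ℝ) : ℕ :=
  {μ : ℝ | Module.finrank ℝ (LinearMap.ker (Matrix.toLin' (A - μ • 1))) = 2}.ncard

lemma succ_val {n : ℕ} [NeZero n] (k : Fin n) :
    ((k+1 : Fin n)).val = if k.val + 1 = n then 0 else k.val + 1 := by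
  obtain ⟨m, rfl⟩ := Nat.exists_eq_succ_of_ne_zero (NeZero.ne n)
  rw [Fin.val_add_one]
  rcases eq_or_ne k (Fin.last m) with h | h
  · subst h; simp [Fin.val_last]
  · rw [if_neg h, if_neg]
    intro hc
    exact h (Fin.ext (by simpa [Fin.val_last] using Nat.succ_injective hc))

lemma succ_eq_iff {n : ℕ} [NeZero n] (k s : Fin n) :
    k + 1 = s ↔ (k.val + 1 = s.val ∨ (k.val + 1 = n ∧ s.val = 0)) := by
  rw [Fin.ext_iff, succ_val]
  have := k.is_lt; have := s.is_lt
  split_ifs with h <;> omega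

lemma lax_cases {n : ℕ} [NeZero n] (hn : 3 ≤ n) (z : (Fin n → ℝ) × (Fin n → ℝ)) (k s : Fin n) :
    (Lax z k s = 0 ∧ LaxBar z k s = 0) ∨
    (k = s ∧ Lax z k s = z.2 k ∧ LaxBar z k s = z.2 k) ∨
    (k.val + 1 = s.val ∧ Lax z k s = bfun z k ∧ LaxBar z k s = bfun z k) ∨
    (k.val + 1 = n ∧ s.val = 0 ∧ Lax z k s = bfun z k ∧ LaxBar z k s = -bfun z k) ∨
    (s.val + 1 = k.val ∧ Lax z k s = bfun z s ∧ LaxBar z k s = bfun z s) ∨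
    (s.val + 1 = n ∧ k.val = 0 ∧ Lax z k s = bfun z s ∧ LaxBar z k s = -bfun z s) := by
  have hk := k.is_lt; have hs := s.is_lt
  by_cases h1 : k = s
  · subst h1
    have h2 : ¬ (k + 1 = k) := by rw [succ_eq_iff]; omega
    right; left
    refine ⟨rfl, ?_, ?_⟩ <;> simp [Lax, LaxBar, h2]
  · have hks : k.val ≠ s.val := fun h => h1 (Fin.ext h)
    by_cases h2 : k + 1 = s
    · rw [succ_eq_iff] at h2
      rcases h2 with h2 | ⟨h2, h2'⟩
      · have e2 : k + 1 = s := by rw [succ_eq_iff]; omega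
        have e3 : ¬ (s + 1 = k) := by rw [succ_eq_iff]; omega
        have e0 : ¬ (k + 1 = 0) := by rw [succ_eq_iff]; simp; omega
        have hs0 : s ≠ 0 := by intro h; rw [h] at h2; simp at h2
        right; right; left
        refine ⟨h2, ?_, ?_⟩ <;> simp [Lax, LaxBar, sgn, h1, e2, e3, e0, hs0]
      · have e2 : k + 1 = s := by rw [succ_eq_iff]; omega
        have e3 : ¬ (s + 1 = k) := by rw [succ_eq_iff]; omega
        have e0 : (k + 1 = (0 : Fin n)) := by rw [succ_eq_iff]; simp; omega
        have hs0 : s = 0 := Fin.ext (by simp [h2'])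
        have hv1 : (1 : Fin n).val = 1 := by rw [Fin.val_one']; exact Nat.mod_eq_of_lt (by omega)
        have hA : ¬ (k = 0) := by intro h; rw [h] at h2; simp at h2; omega
        have hB : ¬ ((1 : Fin n) = k) := by intro h; rw [← h] at h2; omega
        have hn1 : n ≠ 1 := by omega
        right; right; right; left
        refine ⟨h2, h2', ?_, ?_⟩ <;>
          simp [Lax, LaxBar, sgn, h1, e2, e3, e0, hs0, hA, hB, hn1]
    · by_cases h3 : s + 1 = k
      · rw [succ_eq_iff] at h3
        rcases h3 with h3 | ⟨h3, h3'⟩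
        · have e3 : s + 1 = k := by rw [succ_eq_iff]; omega
          have e0 : ¬ (s + 1 = 0) := by rw [succ_eq_iff]; simp; omega
          have hk0 : k ≠ 0 := by intro h; rw [h] at h3; simp at h3
          right; right; right; right; left
          refine ⟨h3, ?_, ?_⟩ <;> simp [Lax, LaxBar, sgn, h1, h2, e3, e0, hk0]
        · have e3 : s + 1 = k := by rw [succ_eq_iff]; omega
          have e0 : (s + 1 = (0 : Fin n)) := by rw [succ_eq_iff]; simp; omega
          have hk0 : k = 0 := Fin.ext (by simp [h3'])
          have hv1 : (1 : Fin n).val = 1 := by rw [Fin.val_one']; exact Nat.mod_eq_of_lt (by omega)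
          have hC : ¬ ((0 : Fin n) = s) := by intro h; rw [← h] at h3; simp at h3; omega
          have hD : ¬ ((1 : Fin n) = s) := by intro h; rw [← h] at h3; omega
          have hn1 : n ≠ 1 := by omega
          right; right; right; right; right
          refine ⟨h3, h3', ?_, ?_⟩ <;>
            simp [Lax, LaxBar, sgn, h1, h2, e3, e0, hk0, hC, hD, hn1]
      · left
        constructor <;> simp [Lax, LaxBar, h1, h2, h3]

lemma key {n : ℕ} [NeZero n] (hn : 3 ≤ n) (z : (Fin n → ℝ) × (Fin n → ℝ)) :
    ∀ j : ℕ, j < n → ∀ r s : Fin n,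
      ((j < ((r.val : ℤ) - s.val).natAbs ∧ j + ((r.val : ℤ) - s.val).natAbs < n →
        (Lax z ^ j) r s = 0 ∧ (LaxBar z ^ j) r s = 0) ∧
       (((r.val : ℤ) - s.val).natAbs + j < n → (Lax z ^ j) r s = (LaxBar z ^ j) r s) ∧
       (j < ((r.val : ℤ) - s.val).natAbs → (LaxBar z ^ j) r s = -((Lax z ^ j) r s))) := by
  intro j
  induction j with
  | zero =>
    intro _ r s
    refine ⟨?_, ?_, ?_⟩
    · rintro ⟨h, -⟩
      have hne : r ≠ s := by
        intro e; subst e; omega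
      simp [Matrix.one_apply_ne hne]
    · intro _; simp
    · intro h
      have hne : r ≠ s := by
        intro e; subst e; omega
      simp [Matrix.one_apply_ne hne]
  | succ j IH =>
    intro hj r s
    have IH' := IH (by omega)
    have hr := r.is_lt; have hs := s.is_lt
    rw [pow_succ (Lax z) j, pow_succ (LaxBar z) j]
    simp only [Matrix.mul_apply]
    refine ⟨?_, ?_, ?_⟩
    · rintro ⟨h1, h2⟩
      refine ⟨Finset.sum_eq_zero fun k _ => ?_, Finset.sum_eq_zero fun k _ => ?_⟩ <;>
      · have hkl := k.is_lt
        rcases lax_cases hn z k s with ⟨hL, hB⟩ | ⟨hk, hL, hB⟩ | ⟨hk, hL, hB⟩ |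
          ⟨hk, hk', hL, hB⟩ | ⟨hk, hL, hB⟩ | ⟨hk, hk', hL, hB⟩
        · simp [hL, hB]
        · subst hk
          refine mul_eq_zero_of_left ?_ _
          first
            | exact ((IH' r k).1 ⟨by omega, by omega⟩).1
            | exact ((IH' r k).1 ⟨by omega, by omega⟩).2
        · refine mul_eq_zero_of_left ?_ _
          first
            | exact ((IH' r k).1 ⟨by omega, by omega⟩).1
            | exact ((IH' r k).1 ⟨by omega, by omega⟩).2
        · refine mul_eq_zero_of_left ?_ _
          first
            | exact ((IH' r k).1 ⟨by omega, by omega⟩).1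
            | exact ((IH' r k).1 ⟨by omega, by omega⟩).2
        · refine mul_eq_zero_of_left ?_ _
          first
            | exact ((IH' r k).1 ⟨by omega, by omega⟩).1
            | exact ((IH' r k).1 ⟨by omega, by omega⟩).2
        · refine mul_eq_zero_of_left ?_ _
          first
            | exact ((IH' r k).1 ⟨by omega, by omega⟩).1
            | exact ((IH' r k).1 ⟨by omega, by omega⟩).2
    · intro h
      refine Finset.sum_congr rfl fun k _ => ?_
      have hkl := k.is_lt
      rcases lax_cases hn z k s with ⟨hL, hB⟩ | ⟨hk, hL, hB⟩ | ⟨hk, hL, hB⟩ |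
        ⟨hk, hk', hL, hB⟩ | ⟨hk, hL, hB⟩ | ⟨hk, hk', hL, hB⟩
      · rw [hL, hB, mul_zero, mul_zero]
      · subst hk
        rw [hL, hB, (IH' r k).2.1 (by omega)]
      · rw [hL, hB, (IH' r k).2.1 (by omega)]
      · rw [hL, hB, (IH' r k).2.2 (by omega)]; ring
      · rw [hL, hB, (IH' r k).2.1 (by omega)]
      · rw [hL, hB, (IH' r k).2.2 (by omega)]; ring
    · intro h
      rw [← Finset.sum_neg_distrib]
      refine Finset.sum_congr rfl fun k _ => ?_
      have hkl := k.is_lt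
      rcases lax_cases hn z k s with ⟨hL, hB⟩ | ⟨hk, hL, hB⟩ | ⟨hk, hL, hB⟩ |
        ⟨hk, hk', hL, hB⟩ | ⟨hk, hL, hB⟩ | ⟨hk, hk', hL, hB⟩
      · rw [hL, hB, mul_zero, mul_zero, neg_zero]
      · subst hk
        rw [hL, hB, (IH' r k).2.2 (by omega)]; ring
      · rw [hL, hB, (IH' r k).2.2 (by omega)]; ring
      · rw [hL, hB, (IH' r k).2.1 (by omega)]; ring
      · rw [hL, hB, (IH' r k).2.2 (by omega)]; ring
      · rw [hL, hB, (IH' r k).2.1 (by omega)]; ring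

/-- For all z, 1 ≤ j ≤ n and indices r ≤ s with s − r < n − j,
the (r,s) (and (s,r)) entry of L^j − L̄^j vanishes. (0-indexed.) -/
theorem stmt0 (n : ℕ) [NeZero n] (hn : 2 ≤ n) (z : (Fin n → ℝ) × (Fin n → ℝ))
    (j : ℕ) (hj1 : 1 ≤ j) (hjn : j ≤ n) (r s : Fin n) (hrs : r.val ≤ s.val)
    (hband : s.val - r.val < n - j) :
    (Lax z ^ j - LaxBar z ^ j) r s = 0 ∧ (Lax z ^ j - LaxBar z ^ j) s r = 0 := by
  have hr := r.is_lt; have hs := s.is_lt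
  rcases eq_or_lt_of_le hn with h2 | h3
  · -- n = 2
    have hn2 : n = 2 := h2.symm
    subst hn2
    have hj : j = 1 := by omega
    subst hj
    have hrs' : r = s := Fin.ext (by omega)
    subst hrs'
    have hne : ¬ (r + 1 = r) := by rw [succ_eq_iff]; omega
    constructor <;> simp [pow_one, Matrix.sub_apply, Lax, LaxBar, hne]
  · have hjn' : j < n := by omega
    have K := key h3 z j hjn'
    constructor
    · rw [Matrix.sub_apply, (K r s).2.1 (by omega), sub_self]
    · rw [Matrix.sub_apply, (K s r).2.1 (by omega), sub_self]
end

section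
/- For every phase-space point z ∈ ℝ^{2n}: (i) for every 1 ≤ j ≤ n−1 and every 1 ≤ r ≤ j, the (r, r+n−j) entry of L(z)^j − L̄(z)^j equals 2·b_{r−1}·b_{r−2}···b_{r−j}, where the subscripts of b are taken mod n with representatives in {1,…,n}; (ii) for j = n, every diagonal entry of L(z)^n − L̄(z)^n equals 4, i.e. (L(z)^n − L̄(z)^n)_{rr} = 4 for all 1 ≤ r ≤ n. -/
open Matrix BigOperators

open Fin.CommRing

noncomputable def W {n : ℕ} [NeZero n] (z : (Fin n → ℝ) × (Fin n → ℝ)) : ℕ → ℤ → ℤ → ℝ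
  | 0, r, m => if r = m then 1 else 0
  | j+1, r, m => W z j r (m-1) * bfun z ((m-1 : ℤ) : Fin n)
      + W z j r m * z.2 ((m : ℤ) : Fin n)
      + W z j r (m+1) * bfun z ((m : ℤ) : Fin n)

variable {n : ℕ} [NeZero n] (z : (Fin n → ℝ) × (Fin n → ℝ))

lemma W_band : ∀ (j : ℕ) (r m : ℤ), (m < r - j ∨ r + j < m) → W z j r m = 0 := by
  intro j
  induction j with
  | zero => intro r m h; simp only [W]; rw [if_neg]; omega
  | succ j ih =>
      intro r m h
      simp only [W]
      rw [ih r (m-1) (by push_cast at h ⊢; omega), ih r m (by push_cast at h ⊢; omega),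
        ih r (m+1) (by push_cast at h ⊢; omega)]
      ring

lemma W_back : ∀ (j : ℕ) (r : ℤ), W z j r (r - j) =
    ∏ k ∈ Finset.range j, bfun z (((r - (k+1) : ℤ)) : Fin n) := by
  intro j
  induction j with
  | zero => intro r; simp [W]
  | succ j ih =>
      intro r
      simp only [W]
      push_cast
      rw [W_band z j r (r - (j+1) - 1) (by omega),
        W_band z j r (r - (j+1)) (by omega)]
      rw [show (r : ℤ) - (j+1) + 1 = r - j by ring, ih r, Finset.prod_range_succ]
      push_cast
      ring

lemma W_fwd : ∀ (j : ℕ) (r : ℤ), W z j r (r + j) =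
    ∏ k ∈ Finset.range j, bfun z (((r + k : ℤ)) : Fin n) := by
  intro j
  induction j with
  | zero => intro r; simp [W]
  | succ j ih =>
      intro r
      simp only [W]
      push_cast
      rw [W_band z j r (r + (j+1)) (by omega),
        W_band z j r (r + (j+1) + 1) (by omega)]
      rw [show (r : ℤ) + (j+1) - 1 = r + j by ring, ih r, Finset.prod_range_succ]
      push_cast
      rw [show (r:Fin n) + ((j:Fin n) + 1) - 1 = (r:Fin n) + j by ring]
      ring







lemma lax_rec (j : ℕ) (r s : Fin n) :
    (Lax z ^ (j+1)) r s = (Lax z ^ j) r s * z.2 s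
      + (Lax z ^ j) r (s - 1) * bfun z (s - 1)
      + (Lax z ^ j) r (s + 1) * bfun z s := by
  rw [pow_succ, Matrix.mul_apply]
  simp only [Lax, mul_add, mul_ite, mul_zero, Finset.sum_add_distrib]
  congr 1
  congr 1
  · rw [Finset.sum_eq_single s (fun b _ hb => by rw [if_neg hb]) (by simp)]
    simp
  · rw [Finset.sum_eq_single (s - 1) (fun b _ hb => by
        rw [if_neg (by rwa [← eq_sub_iff_add_eq] at *)]) (by simp)]
    simp
  · rw [Finset.sum_eq_single (s + 1) (fun b _ hb => by rw [if_neg (Ne.symm hb)]) (by simp)]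
    simp

lemma laxbar_rec (j : ℕ) (r s : Fin n) :
    (LaxBar z ^ (j+1)) r s = (LaxBar z ^ j) r s * z.2 s
      + (LaxBar z ^ j) r (s - 1) * (sgn (s-1) * bfun z (s - 1))
      + (LaxBar z ^ j) r (s + 1) * (sgn s * bfun z s) := by
  rw [pow_succ, Matrix.mul_apply]
  simp only [LaxBar, mul_add, mul_ite, mul_zero, Finset.sum_add_distrib]
  congr 1
  congr 1
  · rw [Finset.sum_eq_single s (fun b _ hb => by rw [if_neg hb]) (by simp)]
    simp
  · rw [Finset.sum_eq_single (s - 1) (fun b _ hb => by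
        rw [if_neg (by rwa [← eq_sub_iff_add_eq] at *)]) (by simp)]
    simp
  · rw [Finset.sum_eq_single (s + 1) (fun b _ hb => by rw [if_neg (Ne.symm hb)]) (by simp)]
    simp

lemma val_sub_one (hn : 2 ≤ n) (s : Fin n) :
    (s - 1).val = if s.val = 0 then n - 1 else s.val - 1 := by
  have h1 : (1 : Fin n).val = 1 := by rw [Fin.val_one']; exact Nat.mod_eq_of_lt (by omega)
  have hs := s.isLt
  rw [Fin.sub_def]
  simp only [h1, Fin.val_mk]
  split
  · next h => rw [h, Nat.add_zero, Nat.mod_eq_of_lt (by omega)]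
  · next h => rw [show n - 1 + s.val = n + (s.val - 1) by omega, Nat.add_mod_left,
      Nat.mod_eq_of_lt (by omega)]

lemma val_add_one (hn : 2 ≤ n) (s : Fin n) :
    (s + 1).val = if s.val = n - 1 then 0 else s.val + 1 := by
  have h1 : (1 : Fin n).val = 1 := by rw [Fin.val_one']; exact Nat.mod_eq_of_lt (by omega)
  have hs := s.isLt
  rw [Fin.add_def]
  simp only [h1, Fin.val_mk]
  split
  · next h => rw [h, show n - 1 + 1 = n by omega, Nat.mod_self]
  · next h => rw [Nat.mod_eq_of_lt (by omega)]

lemma sgn_eq_one (hn : 2 ≤ n) (s : Fin n) (hs : s.val ≠ n - 1) : sgn s = 1 := by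
  unfold sgn
  rw [if_neg]
  intro hcon
  have h := congrArg Fin.val hcon
  rw [val_add_one hn, if_neg hs] at h
  simp at h

lemma sgn_eq_neg_one (hn : 2 ≤ n) (s : Fin n) (hs : s.val = n - 1) : sgn s = -1 := by
  unfold sgn
  rw [if_pos]
  exact Fin.ext (by rw [val_add_one hn, if_pos hs]; rfl)

lemma sgn_sub_one_eq (s : Fin n) :
    sgn (s - 1) = if s = 0 then -1 else 1 := by
  unfold sgn
  rw [sub_add_cancel]

lemma lift (hn : 2 ≤ n) : ∀ j : ℕ, j ≤ n → ∀ r s : Fin n,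
    (Lax z ^ j) r s = W z j r.val ((s.val : ℤ) - n) + W z j r.val (s.val : ℤ)
        + W z j r.val ((s.val : ℤ) + n) ∧
    (LaxBar z ^ j) r s = -W z j r.val ((s.val : ℤ) - n) + W z j r.val (s.val : ℤ)
        - W z j r.val ((s.val : ℤ) + n) := by
  intro j
  induction j with
  | zero =>
      intro _ r s
      have hr := r.isLt
      have hs := s.isLt
      have h1 : W z 0 r.val ((s.val:ℤ) - n) = 0 := W_band z 0 _ _ (by omega)
      have h2 : W z 0 r.val ((s.val:ℤ) + n) = 0 := W_band z 0 _ _ (by omega)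
      rw [pow_zero, pow_zero, h1, h2]
      simp only [W, Matrix.one_apply]
      constructor
      · simp [Fin.ext_iff]
      · simp [Fin.ext_iff]
  | succ j ih =>
      intro hj r s
      have hj' : j ≤ n := by omega
      have hr := r.isLt
      have hs := s.isLt
      have e_self := ih hj' r s
      have e_sub := ih hj' r (s - 1)
      have e_add := ih hj' r (s + 1)
      rcases eq_or_ne s.val 0 with h0 | h0
      · -- s = 0 case
        have t1 : (((s - 1).val :ℕ) : ℤ) = (s.val : ℤ) + (n:ℤ) - 1 := by
          rw [val_sub_one hn, if_pos h0]; push_cast; omega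
        have t2 : (((s + 1).val :ℕ) : ℤ) = (s.val : ℤ) + 1 := by
          rw [val_add_one hn, if_neg (by omega)]; push_cast; ring
        have hsz : s = 0 := Fin.ext h0
        constructor
        · rw [lax_rec, e_self.1, e_sub.1, e_add.1, t1, t2]
          simp only [W, Int.cast_sub, Int.cast_add, Int.cast_one, Int.cast_natCast,
            Fin.cast_val_eq_self, Fin.natCast_self, sub_zero, add_zero]
          rw [W_band z j r.val ((s.val:ℤ) + n - 1 + n) (by omega),
            W_band z j r.val ((s.val:ℤ) - n - 1) (by omega)]
          ring_nf
        · rw [laxbar_rec, e_self.2, e_sub.2, e_add.2, t1, t2,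
            sgn_sub_one_eq, if_pos hsz, sgn_eq_one hn s (by omega)]
          simp only [W, Int.cast_sub, Int.cast_add, Int.cast_one, Int.cast_natCast,
            Fin.cast_val_eq_self, Fin.natCast_self, sub_zero, add_zero]
          rw [W_band z j r.val ((s.val:ℤ) + n - 1 + n) (by omega),
            W_band z j r.val ((s.val:ℤ) - n - 1) (by omega)]
          ring_nf
      · rcases eq_or_ne s.val (n-1) with h1 | h1
        · -- s = n-1 case
          have t1 : (((s - 1).val :ℕ) : ℤ) = (s.val : ℤ) - 1 := by
            rw [val_sub_one hn, if_neg h0]; push_cast; omega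
          have t2 : (((s + 1).val :ℕ) : ℤ) = (s.val : ℤ) - n + 1 := by
            rw [val_add_one hn, if_pos h1]; push_cast; omega
          constructor
          · rw [lax_rec, e_self.1, e_sub.1, e_add.1, t1, t2]
            simp only [W, Int.cast_sub, Int.cast_add, Int.cast_one, Int.cast_natCast,
              Fin.cast_val_eq_self, Fin.natCast_self, sub_zero, add_zero]
            rw [W_band z j r.val ((s.val:ℤ) - n + 1 - n) (by omega),
              W_band z j r.val ((s.val:ℤ) + n + 1) (by omega)]
            ring_nf
          · rw [laxbar_rec, e_self.2, e_sub.2, e_add.2, t1, t2,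
              sgn_sub_one_eq, if_neg (by intro hc; exact h0 (by rw [hc]; rfl)),
              sgn_eq_neg_one hn s h1]
            simp only [W, Int.cast_sub, Int.cast_add, Int.cast_one, Int.cast_natCast,
              Fin.cast_val_eq_self, Fin.natCast_self, sub_zero, add_zero]
            rw [W_band z j r.val ((s.val:ℤ) - n + 1 - n) (by omega),
              W_band z j r.val ((s.val:ℤ) + n + 1) (by omega)]
            ring_nf
        · -- middle case
          have t1 : (((s - 1).val :ℕ) : ℤ) = (s.val : ℤ) - 1 := by
            rw [val_sub_one hn, if_neg h0]; push_cast; omega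
          have t2 : (((s + 1).val :ℕ) : ℤ) = (s.val : ℤ) + 1 := by
            rw [val_add_one hn, if_neg h1]; push_cast; ring
          constructor
          · rw [lax_rec, e_self.1, e_sub.1, e_add.1, t1, t2]
            simp only [W, Int.cast_sub, Int.cast_add, Int.cast_one, Int.cast_natCast,
              Fin.cast_val_eq_self, Fin.natCast_self, sub_zero, add_zero]
            ring_nf
          · rw [laxbar_rec, e_self.2, e_sub.2, e_add.2, t1, t2,
              sgn_sub_one_eq, if_neg (by intro hc; exact h0 (by rw [hc]; rfl)),
              sgn_eq_one hn s h1]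
            simp only [W, Int.cast_sub, Int.cast_add, Int.cast_one, Int.cast_natCast,
              Fin.cast_val_eq_self, Fin.natCast_self, sub_zero, add_zero]
            ring_nf

lemma prod_bfun : ∏ i : Fin n, bfun z i = 1 := by
  simp only [bfun]
  rw [← Real.exp_sum]
  have h : ∑ i : Fin n, (z.1 i - z.1 (i + 1)) / 2 = 0 := by
    simp only [sub_div, Finset.sum_sub_distrib]
    rw [show ∑ i : Fin n, z.1 (i+1) / 2 = ∑ i : Fin n, z.1 i / 2 from
      Fintype.sum_equiv (Equiv.addRight 1) _ _ (fun i => rfl), sub_self]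
  rw [h, Real.exp_zero]

open Fin.NatCast

/-- the first nonzero diagonal of L^j − L̄^j.  Here indices are
0-based: 1-indexed row r ∈ {1,…,j} corresponds to r : Fin n with r.val < j, and
the 1-indexed entry (r, r+n−j) with value 2 b_{r-1}⋯b_{r-j} becomes the entry
(r, r + (n-j)) with value 2 ∏_{k=1}^{j} b_{r-k} (Fin n arithmetic = mod n). -/
theorem stmt1 (n : ℕ) [NeZero n] (hn : 2 ≤ n) (z : (Fin n → ℝ) × (Fin n → ℝ)) :
    (∀ j : ℕ, 1 ≤ j → j ≤ n - 1 → ∀ r : Fin n, r.val < j →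
      (Lax z ^ j - LaxBar z ^ j) r (r + ((n - j : ℕ) : Fin n)) =
        2 * ∏ k ∈ Finset.range j, bfun z (r - ((k + 1 : ℕ) : Fin n))) ∧
    (∀ r : Fin n, (Lax z ^ n - LaxBar z ^ n) r r = 4) := by
  constructor
  · intro j hj1 hj2 r hrj
    have hr := r.isLt
    have hc : ((n-j:ℕ) : Fin n).val = n - j := by
      rw [Fin.val_natCast]; exact Nat.mod_eq_of_lt (by omega)
    have hσ : (((r + ((n-j:ℕ):Fin n)).val : ℕ) : ℤ) = (r.val:ℤ) + n - j := by
      rw [Fin.add_def, hc, Fin.val_mk, Nat.mod_eq_of_lt (by omega)]; push_cast; omega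
    rw [Matrix.sub_apply, (lift z hn j (by omega) r _).1, (lift z hn j (by omega) r _).2, hσ]
    rw [W_band z j r.val ((r.val:ℤ) + n - j + n) (by omega),
      show ((r.val:ℤ) + n - j - n) = (r.val:ℤ) - j by ring, W_back z j r.val]
    rw [show ∏ k ∈ Finset.range j, bfun z (((r.val:ℤ) - (k+1) : ℤ) : Fin n)
        = ∏ k ∈ Finset.range j, bfun z (r - ((k + 1 : ℕ) : Fin n)) from
      Finset.prod_congr rfl (fun k _ => by
        congr 1
        simp only [Int.cast_sub, Int.cast_add, Int.cast_one, Int.cast_natCast,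
          Fin.cast_val_eq_self, Nat.cast_add, Nat.cast_one]
        try ring)]
    ring
  · intro r
    have hr := r.isLt
    rw [Matrix.sub_apply, (lift z hn n le_rfl r r).1, (lift z hn n le_rfl r r).2]
    rw [W_back z n r.val, W_fwd z n r.val]
    have P1 : ∏ k ∈ Finset.range n, bfun z (((r.val:ℤ) - (k+1) : ℤ) : Fin n) = 1 := by
      rw [← Fin.prod_univ_eq_prod_range (fun k => bfun z (((r.val:ℤ) - ((k:ℕ)+1) : ℤ) : Fin n)) n]
      rw [show ∏ i : Fin n, bfun z (((r.val:ℤ) - ((i.val:ℕ)+1) : ℤ) : Fin n)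
          = ∏ i : Fin n, bfun z i from
        Fintype.prod_equiv (Equiv.subLeft (r - 1)) _ _ (fun i => by
          simp only [Equiv.subLeft_apply, Int.cast_sub, Int.cast_add, Int.cast_one,
            Int.cast_natCast, Fin.cast_val_eq_self]
          try (congr 1; ring))]
      exact prod_bfun z
    have P2 : ∏ k ∈ Finset.range n, bfun z (((r.val:ℤ) + k : ℤ) : Fin n) = 1 := by
      rw [← Fin.prod_univ_eq_prod_range (fun k => bfun z (((r.val:ℤ) + (k:ℕ) : ℤ) : Fin n)) n]
      rw [show ∏ i : Fin n, bfun z (((r.val:ℤ) + ((i.val:ℕ)) : ℤ) : Fin n)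
          = ∏ i : Fin n, bfun z i from
        Fintype.prod_equiv (Equiv.addLeft r) _ _ (fun i => by
          simp only [Equiv.coe_addLeft, Int.cast_add, Int.cast_natCast,
            Fin.cast_val_eq_self])]
      exact prod_bfun z
    rw [P1, P2]
    ring
end

section
/- Fix a phase-space point z ∈ ℝ^{2n} and real numbers c_2, …, c_n. If Σ_{j=2}^n c_j (L(z)^{j−1} − L̄(z)^{j−1}) = 0 (the zero n×n matrix), then c_2 = c_3 = ⋯ = c_n = 0. -/
open Matrix BigOperators

namespace Stmt3Aux

variable {n : ℕ} [NeZero n]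

def idx (n : ℕ) [NeZero n] (a : ℕ) : Fin n :=
  ⟨a % n, Nat.mod_lt a (Nat.pos_of_ne_zero (NeZero.ne n))⟩

lemma idx_congr {a b : ℕ} (h : a % n = b % n) : idx n a = idx n b := Fin.ext h

lemma zero_eq_idx : (0 : Fin n) = idx n 0 := by
  apply Fin.ext; simp [idx]

lemma idx_add_one (a : ℕ) : idx n a + 1 = idx n (a + 1) := by
  apply Fin.ext
  rw [Fin.add_def]
  show (a % n + (1 : Fin n).val) % n = (a + 1) % n
  rw [Fin.val_one', Nat.add_mod a 1 n]

lemma idx_sub_one (hn : 2 ≤ n) (a : ℕ) : idx n a - 1 = idx n (a + (n - 1)) := by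
  apply Fin.ext
  rw [Fin.sub_def]
  show (n - (1 : Fin n).val + a % n) % n = (a + (n - 1)) % n
  rw [Fin.val_one', Nat.mod_eq_of_lt hn, Nat.add_comm (n - 1) (a % n)]
  conv_rhs => rw [Nat.add_mod, Nat.mod_eq_of_lt (show n - 1 < n by omega)]

lemma idx_eq_idx_iff {a b : ℕ} (ha : a < n) (hb : b < n) : idx n a = idx n b ↔ a = b := by
  rw [Fin.ext_iff]
  simp [idx, Nat.mod_eq_of_lt ha, Nat.mod_eq_of_lt hb]

lemma sgn_idx (a : ℕ) : sgn (idx n a) = if (a + 1) % n = 0 then (-1 : ℝ) else 1 := by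
  unfold sgn
  rw [idx_add_one]
  exact if_congr (by rw [Fin.ext_iff]; simp [idx]) rfl rfl

lemma mulL_apply (z : (Fin n → ℝ) × (Fin n → ℝ)) (M : Matrix (Fin n) (Fin n) ℝ) (r s : Fin n) :
    (Lax z * M) r s = z.2 r * M r s + bfun z r * M (r + 1) s + bfun z (r - 1) * M (r - 1) s := by
  rw [Matrix.mul_apply]
  have key : ∀ j : Fin n, Lax z r j * M j s =
      (if j = r then z.2 r * M j s else 0) + (if j = r + 1 then bfun z r * M j s else 0) +
      (if j = r - 1 then bfun z j * M j s else 0) := by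
    intro j
    simp only [Lax]
    rw [add_mul, add_mul]
    congr 1
    · congr 1
      · rw [ite_mul, zero_mul]; exact if_congr eq_comm rfl rfl
      · rw [ite_mul, zero_mul]; exact if_congr eq_comm rfl rfl
    · rw [ite_mul, zero_mul]; exact if_congr eq_sub_iff_add_eq.symm rfl rfl
  simp_rw [key]
  rw [Finset.sum_add_distrib, Finset.sum_add_distrib, Finset.sum_ite_eq',
    Finset.sum_ite_eq', Finset.sum_ite_eq']
  simp

lemma mulLBar_apply (z : (Fin n → ℝ) × (Fin n → ℝ)) (M : Matrix (Fin n) (Fin n) ℝ) (r s : Fin n) :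
    (LaxBar z * M) r s = z.2 r * M r s + sgn r * bfun z r * M (r + 1) s +
      sgn (r - 1) * bfun z (r - 1) * M (r - 1) s := by
  rw [Matrix.mul_apply]
  have key : ∀ j : Fin n, LaxBar z r j * M j s =
      (if j = r then z.2 r * M j s else 0) +
      (if j = r + 1 then sgn r * bfun z r * M j s else 0) +
      (if j = r - 1 then sgn j * bfun z j * M j s else 0) := by
    intro j
    simp only [LaxBar]
    rw [add_mul, add_mul]
    congr 1
    · congr 1
      · rw [ite_mul, zero_mul]; exact if_congr eq_comm rfl rfl
      · rw [ite_mul, zero_mul]; exact if_congr eq_comm rfl rfl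
    · rw [ite_mul, zero_mul]; exact if_congr eq_sub_iff_add_eq.symm rfl rfl
  simp_rw [key]
  rw [Finset.sum_add_distrib, Finset.sum_add_distrib, Finset.sum_ite_eq',
    Finset.sum_ite_eq', Finset.sum_ite_eq']
  simp

lemma main (hn : 2 ≤ n) (z : (Fin n → ℝ) × (Fin n → ℝ)) :
    ∀ m : ℕ, 1 ≤ m → m < n →
    ((∀ a : ℕ, a + m < n → (Lax z ^ m - LaxBar z ^ m) (idx n a) 0 = 0) ∧
     ((Lax z ^ m - LaxBar z ^ m) (idx n (n - m)) 0 =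
        2 * ∏ i ∈ Finset.Ico (n - m) n, bfun z (idx n i)) ∧
     (∀ a : ℕ, m < a → a < n → (Lax z ^ m + LaxBar z ^ m) (idx n a) 0 = 0)) := by
  have h4 : sgn (idx n 0) = 1 := by
    rw [sgn_idx, Nat.mod_eq_of_lt (by omega : 0 + 1 < n), if_neg (by omega)]
  have h5 : sgn (idx n (n - 1)) = -1 := by
    rw [sgn_idx, show n - 1 + 1 = n by omega, Nat.mod_self, if_pos rfl]
  intro m hm
  induction m, hm using Nat.le_induction with
  | base =>
    intro _
    refine ⟨?_, ?_, ?_⟩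
    · intro a ha
      rw [pow_one, pow_one, Matrix.sub_apply]
      simp only [Lax, LaxBar]
      rw [zero_eq_idx (n := n)]
      simp only [idx_add_one]
      have c1 : (idx n a = idx n 0) ↔ a = 0 := idx_eq_idx_iff (by omega) (by omega)
      have c2 : ¬(idx n (a + 1) = idx n 0) := by
        rw [idx_eq_idx_iff (by omega) (by omega)]; omega
      have c3 : (idx n (0 + 1) = idx n a) ↔ 0 + 1 = a := idx_eq_idx_iff (by omega) (by omega)
      simp only [c1, c2, c3, h4, if_false]
      split_ifs <;> ring
    · rw [pow_one, pow_one, Matrix.sub_apply]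
      simp only [Lax, LaxBar]
      rw [zero_eq_idx (n := n)]
      simp only [idx_add_one]
      have c1 : ¬(idx n (n - 1) = idx n 0) := by
        rw [idx_eq_idx_iff (by omega) (by omega)]; omega
      have c2 : idx n n = idx n 0 := idx_congr (by simp [Nat.mod_self])
      have c3 : (idx n (0 + 1) = idx n (n - 1)) ↔ 0 + 1 = n - 1 :=
        idx_eq_idx_iff (by omega) (by omega)
      rw [Finset.prod_eq_prod_Ico_succ_bot (show n - 1 < n by omega),
        show n - 1 + 1 = n by omega, Finset.Ico_self, Finset.prod_empty]
      simp only [c1, c2, c3, h4, h5, if_false, if_true]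
      split_ifs <;> ring
    · intro a ha1 ha2
      rw [pow_one, pow_one, Matrix.add_apply]
      simp only [Lax, LaxBar]
      rw [zero_eq_idx (n := n)]
      simp only [idx_add_one]
      have c1 : ¬(idx n a = idx n 0) := by
        rw [idx_eq_idx_iff (by omega) (by omega)]; omega
      have c3 : ¬(idx n (0 + 1) = idx n a) := by
        rw [idx_eq_idx_iff (by omega) (by omega)]; omega
      by_cases hc : a = n - 1
      · subst hc
        have c2 : idx n (n - 1 + 1) = idx n 0 := by
          rw [show n - 1 + 1 = n by omega]; exact idx_congr (by simp [Nat.mod_self])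
        simp only [c1, c2, c3, h5, if_false, if_true]
        ring
      · have c2 : ¬(idx n (a + 1) = idx n 0) := by
          rw [idx_eq_idx_iff (by omega) (by omega)]; omega
        simp only [c1, c2, c3, if_false]
        ring
  | succ m hm ih =>
    intro hs
    have hmn : m < n := by omega
    obtain ⟨A, B, C⟩ := ih hmn
    have Asub : ∀ a : ℕ, a + m < n →
        (Lax z ^ m) (idx n a) 0 = (LaxBar z ^ m) (idx n a) 0 := by
      intro a ha
      have := A a ha
      rwa [Matrix.sub_apply, sub_eq_zero] at this
    have Cneg : ∀ a : ℕ, m < a → a < n →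
        (LaxBar z ^ m) (idx n a) 0 = -((Lax z ^ m) (idx n a) 0) := by
      intro a ha1 ha2
      have := C a ha1 ha2
      rw [Matrix.add_apply] at this
      linarith
    rw [Matrix.sub_apply] at B
    refine ⟨?_, ?_, ?_⟩
    · intro a ha
      rw [pow_succ', pow_succ', Matrix.sub_apply, mulL_apply, mulLBar_apply,
        idx_add_one, idx_sub_one hn]
      rcases Nat.eq_zero_or_pos a with rfl | hapos
      · rw [show (0 : ℕ) + (n - 1) = n - 1 by omega]
        have s1 : sgn (idx n 0) = 1 := h4
        rw [s1, h5, ← Asub 0 (by omega), ← Asub 1 (by omega),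
          Cneg (n - 1) (by omega) (by omega), show (0 : ℕ) + 1 = 1 by rfl]
        ring
      · have e1 : idx n (a + (n - 1)) = idx n (a - 1) :=
          idx_congr (by rw [show a + (n - 1) = (a - 1) + n by omega, Nat.add_mod_right])
        rw [e1]
        have s1 : sgn (idx n a) = 1 := by
          rw [sgn_idx, Nat.mod_eq_of_lt (by omega), if_neg (by omega)]
        have s2 : sgn (idx n (a - 1)) = 1 := by
          rw [sgn_idx, show a - 1 + 1 = a by omega, Nat.mod_eq_of_lt (by omega),
            if_neg (by omega)]
        rw [s1, s2, ← Asub a (by omega), ← Asub (a + 1) (by omega),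
          ← Asub (a - 1) (by omega)]
        ring
    · rw [pow_succ', pow_succ', Matrix.sub_apply, mulL_apply, mulLBar_apply,
        idx_add_one, idx_sub_one hn]
      have e0 : n - (m + 1) + 1 = n - m := by omega
      have e1 : idx n (n - (m + 1) + (n - 1)) = idx n (n - m - 2) :=
        idx_congr (by rw [show n - (m + 1) + (n - 1) = (n - m - 2) + n by omega,
          Nat.add_mod_right])
      rw [e0, e1]
      have s1 : sgn (idx n (n - (m + 1))) = 1 := by
        rw [sgn_idx, e0, Nat.mod_eq_of_lt (by omega), if_neg (by omega)]
      have s2 : sgn (idx n (n - m - 2)) = 1 := by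
        rw [sgn_idx, show n - m - 2 + 1 = n - m - 1 by omega,
          Nat.mod_eq_of_lt (by omega), if_neg (by omega)]
      rw [s1, s2, ← Asub (n - (m + 1)) (by omega), ← Asub (n - m - 2) (by omega)]
      rw [Finset.prod_eq_prod_Ico_succ_bot (show n - (m + 1) < n by omega), e0]
      linear_combination bfun z (idx n (n - (m + 1))) * B
    · intro a ha1 ha2
      rw [pow_succ', pow_succ', Matrix.add_apply, mulL_apply, mulLBar_apply,
        idx_add_one, idx_sub_one hn]
      by_cases hc : a = n - 1
      · subst hc
        have e1 : idx n (n - 1 + 1) = idx n 0 := by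
          rw [show n - 1 + 1 = n by omega]; exact idx_congr (by simp [Nat.mod_self])
        have e2 : idx n (n - 1 + (n - 1)) = idx n (n - 2) :=
          idx_congr (by rw [show n - 1 + (n - 1) = (n - 2) + n by omega, Nat.add_mod_right])
        rw [e1, e2]
        have s2 : sgn (idx n (n - 2)) = 1 := by
          rw [sgn_idx, show n - 2 + 1 = n - 1 by omega,
            Nat.mod_eq_of_lt (by omega), if_neg (by omega)]
        have hC1 := Cneg (n - 1) (by omega) (by omega)
        have hC2 := Cneg (n - 2) (by omega) (by omega)
        rw [h5, s2, hC1, hC2, ← Asub 0 (by omega)]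
        ring
      · have e1 : idx n (a + (n - 1)) = idx n (a - 1) :=
          idx_congr (by rw [show a + (n - 1) = (a - 1) + n by omega, Nat.add_mod_right])
        rw [e1]
        have s1 : sgn (idx n a) = 1 := by
          rw [sgn_idx, Nat.mod_eq_of_lt (by omega), if_neg (by omega)]
        have s2 : sgn (idx n (a - 1)) = 1 := by
          rw [sgn_idx, show a - 1 + 1 = a by omega, Nat.mod_eq_of_lt (by omega),
            if_neg (by omega)]
        rw [s1, s2, Cneg a (by omega) (by omega), Cneg (a + 1) (by omega) (by omega),
          Cneg (a - 1) (by omega) (by omega)]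
        ring
end Stmt3Aux

/-- if Σ_{j=2}^n c_j (L^{j−1} − L̄^{j−1}) = 0 then c_2 = … = c_n = 0. -/
theorem stmt3 (n : ℕ) [NeZero n] (hn : 2 ≤ n) (z : (Fin n → ℝ) × (Fin n → ℝ))
    (c : ℕ → ℝ)
    (h : ∑ j ∈ Finset.Icc 2 n, c j • (Lax z ^ (j - 1) - LaxBar z ^ (j - 1)) = 0) :
    ∀ j ∈ Finset.Icc 2 n, c j = 0 := by
  have hbpos : ∀ r : Fin n, 0 < bfun z r := fun r => Real.exp_pos _
  have key : ∀ j : ℕ, 2 ≤ j → j ≤ n → (∀ j', j < j' → j' ≤ n → c j' = 0) → c j = 0 := by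
    intro j h2 hjn ihi
    have hrow := congrFun (congrFun h (Stmt3Aux.idx n (n - (j - 1)))) 0
    simp only [Matrix.sum_apply, Matrix.smul_apply, smul_eq_mul, Matrix.zero_apply] at hrow
    rw [Finset.sum_eq_single j] at hrow
    · have hB := (Stmt3Aux.main hn z (j - 1) (by omega) (by omega)).2.1
      rw [hB] at hrow
      have hprod : (0 : ℝ) < 2 * ∏ i ∈ Finset.Ico (n - (j - 1)) n, bfun z (Stmt3Aux.idx n i) := by
        have := Finset.prod_pos (fun i (_ : i ∈ Finset.Ico (n - (j - 1)) n) =>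
          hbpos (Stmt3Aux.idx n i))
        linarith
      exact (mul_eq_zero.mp hrow).resolve_right (ne_of_gt hprod)
    · intro j' hj' hne
      have hj'2 : 2 ≤ j' := (Finset.mem_Icc.mp hj').1
      have hj'n : j' ≤ n := (Finset.mem_Icc.mp hj').2
      rcases lt_or_gt_of_ne hne with hlt | hgt
      · have hA := (Stmt3Aux.main hn z (j' - 1) (by omega) (by omega)).1
          (n - (j - 1)) (by omega)
        rw [hA, mul_zero]
      · rw [ihi j' hgt hj'n, zero_mul]
    · intro hj
      exact absurd (Finset.mem_Icc.mpr ⟨h2, hjn⟩) hj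
  have all : ∀ d : ℕ, ∀ j : ℕ, 2 ≤ j → j ≤ n → n ≤ j + d → c j = 0 := by
    intro d
    induction d with
    | zero =>
      intro j h2 hjn hd
      exact key j h2 hjn (fun j' h1 h2' => by exfalso; omega)
    | succ d ihd =>
      intro j h2 hjn hd
      exact key j h2 hjn (fun j' h1 h2' => ihd j' (by omega) h2' (by omega))
  intro j hj
  obtain ⟨h2, hjn⟩ := Finset.mem_Icc.mp hj
  exact all (n - j) j h2 hjn (by omega)
end

section
/- The functions F_1, …, F_n are in involution: for all integers 1 ≤ j, k ≤ n, the Poisson bracket {F_j, F_k} vanishes identically on ℝ^{2n}. -/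
open Matrix BigOperators

/-!
Write `L = P + E + Eᵀ` with `P = diag p` and `E` the cyclic superdiagonal carrying the `b_m`.
The chain rule gives `dF_j = Tr (L^{j-1} dL)`, so with `A = L^{j-1}` one has `∂F_j/∂p_m = A_mm`
and `∂F_j/∂q_m = b_m A_{m,m+1} - b_{m-1} A_{m-1,m}`. Hence `{F_j, F_k}` is a bilinear expression
in two symmetric matrices `A`, `B` that commute with `L` and with each other.

Split it along the cyclic diagonals,
`Y(d) = ∑_m b_m (A_{m,m+d} B_{m+1,m+d} - B_{m,m+d} A_{m+1,m+d})`.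
Multiplying the `(m, m+d)` entries of `[L, B] = 0` and `[L, A] = 0` by `A_{m,m+d}` and `B_{m,m+d}`
and subtracting cancels the `p`'s; summed over `m` and reindexed using the symmetry of `A` and `B`
this reads `Y(d) - Y(d+1) = Y(-d) - Y(1-d)`. So `Y(d) + Y(1-d)` does not depend on `d`, while
`∑_d Y(d) = ∑_m b_m [A, B]_{m,m+1} = 0`. Hence `Y(0) + Y(1) = 0`, and this is `-{F_j, F_k}`.
-/

section CyclicTridiag

variable {R : Type*} [CommRing R] {n : ℕ} [NeZero n]

def cyclicTridiag (p b : Fin n → R) : Matrix (Fin n) (Fin n) R := fun r s =>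
  (if r = s then p r else 0) + (if r + 1 = s then b r else 0) + (if s + 1 = r then b s else 0)

lemma Fin.sum_ite_add_one_eq {M : Type*} [AddCommMonoid M] (f : Fin n → M) (c : Fin n) :
    (∑ t, if t + 1 = c then f t else 0) = f (c - 1) := by
  simp [← eq_sub_iff_add_eq]

lemma isSymm_cyclicTridiag (p b : Fin n → R) : (cyclicTridiag p b).IsSymm := by
  ext r s
  by_cases h : r = s
  · subst h; rfl
  · simp only [transpose_apply, cyclicTridiag, if_neg h, if_neg (Ne.symm h)]
    ring

lemma cyclicTridiag_mul_apply (p b : Fin n → R) (B : Matrix (Fin n) (Fin n) R) (m s : Fin n) :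
    (cyclicTridiag p b * B) m s = p m * B m s + b m * B (m + 1) s + b (m - 1) * B (m - 1) s := by
  simp only [mul_apply, cyclicTridiag, add_mul, ite_mul, zero_mul, Finset.sum_add_distrib,
    Finset.sum_ite_eq, Finset.mem_univ, if_true, Fin.sum_ite_add_one_eq (fun t => b t * B t s)]

lemma mul_cyclicTridiag_apply (p b : Fin n → R) (B : Matrix (Fin n) (Fin n) R) (m s : Fin n) :
    (B * cyclicTridiag p b) m s = B m s * p s + B m (s - 1) * b (s - 1) + B m (s + 1) * b s := by
  simp only [mul_apply, cyclicTridiag, mul_add, mul_ite, mul_zero, Finset.sum_add_distrib,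
    Finset.sum_ite_eq', Finset.sum_ite_eq, Finset.mem_univ, if_true,
    Fin.sum_ite_add_one_eq (fun t => B m t * b t)]

lemma trace_mul_cyclicTridiag (A : Matrix (Fin n) (Fin n) R) (p b : Fin n → R) :
    trace (A * cyclicTridiag p b) = ∑ r, (A r r * p r + (A r (r + 1) + A (r + 1) r) * b r) := by
  have shift : ∑ r, A r (r - 1) * b (r - 1) = ∑ r, A (r + 1) r * b r :=
    (Equiv.sum_comp (Equiv.addRight 1) _).symm.trans (by simp)
  simp only [trace, diag, mul_cyclicTridiag_apply, Finset.sum_add_distrib, shift, add_mul]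
  ring

end CyclicTridiag

section CrossDiag

variable {R : Type*} [CommRing R] {n : ℕ} [NeZero n]
variable (b : Fin n → R) (A B : Matrix (Fin n) (Fin n) R)

def crossDiag (d : Fin n) : R :=
  ∑ m, b m * (A m (m + d) * B (m + 1) (m + d) - B m (m + d) * A (m + 1) (m + d))

variable {A B}

lemma sum_crossDiag_eq_zero (hA : A.IsSymm) (hB : B.IsSymm) (hAB : Commute A B) :
    ∑ d, crossDiag b A B d = 0 := by
  unfold crossDiag
  rw [Finset.sum_comm]
  refine Finset.sum_eq_zero fun m _ => ?_
  have reindex := Equiv.sum_comp (Equiv.addLeft m)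
    fun s => b m * (A m s * B (m + 1) s - B m s * A (m + 1) s)
  simp only [Equiv.coe_addLeft] at reindex
  rw [reindex, ← Finset.mul_sum, Finset.sum_sub_distrib]
  simp only [← hA.apply (m + 1), ← hB.apply (m + 1), ← mul_apply, hAB.eq, sub_self, mul_zero]

lemma crossDiag_neg (hA : A.IsSymm) (hB : B.IsSymm) (d : Fin n) :
    crossDiag b A B (-d) =
      ∑ m, b (m + d) * (A m (m + d) * B m (m + d + 1) - B m (m + d) * A m (m + d + 1)) := by
  rw [crossDiag, ← Equiv.sum_comp (Equiv.addRight d)]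
  refine Finset.sum_congr rfl fun m _ => ?_
  simp only [Equiv.coe_addRight, add_neg_cancel_right, add_right_comm m d 1, hA.apply m,
    hB.apply m]

lemma crossDiag_sub_crossDiag_add_one {p : Fin n → R} (hA : A.IsSymm) (hB : B.IsSymm)
    (hAL : Commute (cyclicTridiag p b) A) (hBL : Commute (cyclicTridiag p b) B) (d : Fin n) :
    crossDiag b A B d - crossDiag b A B (d + 1) =
      crossDiag b A B (-d) - crossDiag b A B (1 - d) := by
  have commute_apply {C : Matrix (Fin n) (Fin n) R} (hC : Commute (cyclicTridiag p b) C) (m s) :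
      p m * C m s + b m * C (m + 1) s + b (m - 1) * C (m - 1) s =
        C m s * p s + C m (s - 1) * b (s - 1) + C m (s + 1) * b s := by
    rw [← cyclicTridiag_mul_apply, ← mul_cyclicTridiag_apply, hC.eq]
  have shift : crossDiag b A B (d + 1) = ∑ m, b (m - 1) *
      (A (m - 1) (m + d) * B m (m + d) - B (m - 1) (m + d) * A m (m + d)) := by
    rw [crossDiag, ← Equiv.sum_comp (Equiv.subRight 1)]
    refine Finset.sum_congr rfl fun m _ => ?_
    simp only [Equiv.subRight_apply, sub_add_cancel, show m - 1 + (d + 1) = m + d by abel]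
  rw [show 1 - d = -(d - 1) by abel, crossDiag_neg b hA hB, crossDiag_neg b hA hB, crossDiag,
    shift]
  simp only [← Finset.sum_sub_distrib]
  refine Finset.sum_congr rfl fun m _ => ?_
  simp only [show m + (d - 1) = m + d - 1 by abel, sub_add_cancel]
  linear_combination A m (m + d) * commute_apply hBL m (m + d) -
    B m (m + d) * commute_apply hAL m (m + d)

end CrossDiag

section Bracket

variable {R : Type*} [CommRing R] [NoZeroDivisors R] [CharZero R] {n : ℕ} [NeZero n]

open Fin.NatCast in
lemma Fin.apply_zero_eq_zero_of_apply_add_one_eq {W : Fin n → R} (hW : ∀ d, W (d + 1) = W d)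
    (hsum : ∑ d, W d = 0) : W 0 = 0 := by
  have const_nat (k : ℕ) : W k = W 0 := by
    induction k with
    | zero => simp
    | succ k ih => rw [Nat.cast_succ, hW, ih]
  have const (d : Fin n) : W d = W 0 := by rw [← Fin.cast_val_eq_self d, const_nat]
  simp only [const, Finset.sum_const, Finset.card_univ, Fintype.card_fin, nsmul_eq_mul] at hsum
  exact (mul_eq_zero.mp hsum).resolve_left (Nat.cast_ne_zero.mpr (NeZero.ne n))

theorem sum_bracket_eq_zero_of_commute {p b : Fin n → R} {A B : Matrix (Fin n) (Fin n) R}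
    (hA : A.IsSymm) (hB : B.IsSymm) (hAL : Commute (cyclicTridiag p b) A)
    (hBL : Commute (cyclicTridiag p b) B) (hAB : Commute A B) :
    ∑ m, ((b m * A m (m + 1) - b (m - 1) * A (m - 1) m) * B m m
      - A m m * (b m * B m (m + 1) - b (m - 1) * B (m - 1) m)) = 0 := by
  have hW : crossDiag b A B 0 + crossDiag b A B (1 - 0) = 0 := by
    refine Fin.apply_zero_eq_zero_of_apply_add_one_eq
      (W := fun d => crossDiag b A B d + crossDiag b A B (1 - d)) (fun d => ?_) ?_
    · rw [show 1 - (d + 1) = -d by abel]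
      linear_combination -crossDiag_sub_crossDiag_add_one b hA hB hAL hBL d
    · rw [Finset.sum_add_distrib, Fintype.sum_equiv (Equiv.subLeft 1)
        (fun d => crossDiag b A B (1 - d)) (crossDiag b A B) fun _ => rfl,
        sum_crossDiag_eq_zero b hA hB hAB, add_zero]
  have shift : ∑ m, b (m - 1) * (A (m - 1) m * B m m - A m m * B (m - 1) m) =
      ∑ m, b m * (A m (m + 1) * B (m + 1) (m + 1) - A (m + 1) (m + 1) * B m (m + 1)) := by
    rw [← Equiv.sum_comp (Equiv.addRight 1)]
    simp only [Equiv.coe_addRight, add_sub_cancel_right]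
  rw [sub_zero, crossDiag, crossDiag, ← Finset.sum_add_distrib] at hW
  calc _ = ∑ m, b m * (A m (m + 1) * B m m - A m m * B m (m + 1))
        - ∑ m, b (m - 1) * (A (m - 1) m * B m m - A m m * B (m - 1) m) := by
        rw [← Finset.sum_sub_distrib]
        exact Finset.sum_congr rfl fun m _ => by ring
    _ = 0 := by
        rw [shift, ← Finset.sum_sub_distrib, ← neg_eq_zero, ← hW, ← Finset.sum_neg_distrib]
        refine Finset.sum_congr rfl fun m _ => ?_
        rw [add_zero, hA.apply m (m + 1), hB.apply m (m + 1)]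
        ring

end Bracket

lemma sum_range_succ_pow_mul_mul_pow {R : Type*} [Semiring R] (a m : R) (j : ℕ) :
    ∑ i ∈ Finset.range (j + 1), a ^ i * m * a ^ (j - i) =
      a ^ j * m + (∑ i ∈ Finset.range j, a ^ i * m * a ^ (j - 1 - i)) * a := by
  rw [Finset.sum_range_succ, Nat.sub_self, pow_zero, mul_one, add_comm, Finset.sum_mul]
  congr 1
  refine Finset.sum_congr rfl fun i hi => ?_
  have hi := Finset.mem_range.mp hi
  rw [mul_assoc _ _ a, ← pow_succ, show j - 1 - i + 1 = j - i by omega]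

lemma Matrix.trace_sum_pow_mul_mul_pow {ι R : Type*} [Fintype ι] [DecidableEq ι] [CommRing R]
    (A M : Matrix ι ι R) (j : ℕ) :
    trace (∑ i ∈ Finset.range j, A ^ i * M * A ^ (j - 1 - i)) = j * trace (A ^ (j - 1) * M) := by
  rw [trace_sum, Finset.sum_congr rfl fun i hi => ?_, Finset.sum_const, Finset.card_range,
    nsmul_eq_mul]
  rw [trace_mul_comm, ← mul_assoc, ← pow_add,
    Nat.sub_add_cancel (by have := Finset.mem_range.mp hi; omega)]

section LaxDerivative

variable {n : ℕ} [NeZero n]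

noncomputable def laxDeriv (z v : (Fin n → ℝ) × (Fin n → ℝ)) : Matrix (Fin n) (Fin n) ℝ :=
  cyclicTridiag v.2 fun r => bfun z r * ((v.1 r - v.1 (r + 1)) / 2)

lemma hasFDerivAt_bfun (z : (Fin n → ℝ) × (Fin n → ℝ)) (r : Fin n) :
    ∃ D : ((Fin n → ℝ) × (Fin n → ℝ)) →L[ℝ] ℝ, HasFDerivAt (fun w => bfun w r) D z ∧
      ∀ v, D v = bfun z r * ((v.1 r - v.1 (r + 1)) / 2) := by
  let coord (k : Fin n) : ((Fin n → ℝ) × (Fin n → ℝ)) →L[ℝ] ℝ :=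
    (ContinuousLinearMap.proj k).comp (ContinuousLinearMap.fst ℝ _ _)
  let halfDiff := (2⁻¹ : ℝ) • (coord r - coord (r + 1))
  have hb : (fun w => bfun w r) = fun w => Real.exp (halfDiff w) := by
    funext w
    simp [halfDiff, coord, bfun, div_eq_inv_mul]
  refine ⟨_, hb ▸ halfDiff.hasFDerivAt.exp, fun v => ?_⟩
  simp [halfDiff, coord, bfun, div_eq_inv_mul]

lemma hasFDerivAt_Lax_apply (z : (Fin n → ℝ) × (Fin n → ℝ)) (r s : Fin n) :
    ∃ D : ((Fin n → ℝ) × (Fin n → ℝ)) →L[ℝ] ℝ, HasFDerivAt (fun w => Lax w r s) D z ∧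
      ∀ v, D v = laxDeriv z v r s := by
  have ite_zero {f : (Fin n → ℝ) × (Fin n → ℝ) → ℝ} {D : _ →L[ℝ] ℝ} (c : Prop) [Decidable c]
      (h : HasFDerivAt f D z) :
      HasFDerivAt (fun w => if c then f w else 0) (if c then D else 0) z := by
    split_ifs
    exacts [h, hasFDerivAt_const 0 z]
  obtain ⟨Dr, hDr, hDr_apply⟩ := hasFDerivAt_bfun z r
  obtain ⟨Ds, hDs, hDs_apply⟩ := hasFDerivAt_bfun z s
  let coord : ((Fin n → ℝ) × (Fin n → ℝ)) →L[ℝ] ℝ :=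
    (ContinuousLinearMap.proj r).comp (ContinuousLinearMap.snd ℝ _ _)
  refine ⟨_, ((ite_zero (r = s) coord.hasFDerivAt).add (ite_zero (r + 1 = s) hDr)).add
    (ite_zero (s + 1 = r) hDs), fun v => ?_⟩
  simp only [laxDeriv, cyclicTridiag, _root_.add_apply, apply_ite (fun D : _ →L[ℝ] ℝ => D v),
    hDr_apply, hDs_apply, ContinuousLinearMap.comp_apply, ContinuousLinearMap.coe_snd',
    ContinuousLinearMap.proj_apply, _root_.zero_apply, coord]

lemma hasFDerivAt_Lax_pow_apply (z : (Fin n → ℝ) × (Fin n → ℝ)) (j : ℕ) (r s : Fin n) :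
    ∃ D : ((Fin n → ℝ) × (Fin n → ℝ)) →L[ℝ] ℝ, HasFDerivAt (fun w => (Lax w ^ j) r s) D z ∧
      ∀ v, D v = (∑ i ∈ Finset.range j, Lax z ^ i * laxDeriv z v * Lax z ^ (j - 1 - i)) r s := by
  induction j generalizing r s with
  | zero => exact ⟨0, by simpa using hasFDerivAt_const _ z, by simp⟩
  | succ j ih =>
    choose D hD hD_apply using ih
    choose E hE hE_apply using hasFDerivAt_Lax_apply z
    have entry : (fun w => (Lax w ^ (j + 1)) r s) =
        fun w => ∑ t, (Lax w ^ j) r t * Lax w t s := by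
      funext w
      rw [pow_succ, mul_apply]
    refine ⟨_, entry ▸ HasFDerivAt.fun_sum fun t _ => (hD r t).mul (hE t s), fun v => ?_⟩
    simp only [FunLike.coe_sum, Finset.sum_apply, _root_.add_apply, _root_.smul_apply, hD_apply,
      hE_apply, smul_eq_mul, Nat.add_sub_cancel, sum_range_succ_pow_mul_mul_pow,
      Matrix.add_apply, Finset.sum_add_distrib]
    simp only [mul_apply, mul_comm (Lax z _ s)]

/-- The factor `1 / j * j` is `1`, except for `j = 0`, where `F 0 = 0`. -/
lemma fderiv_F_apply (j : ℕ) (z v : (Fin n → ℝ) × (Fin n → ℝ)) :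
    fderiv ℝ (F j) z v = (1 / j * j : ℝ) * trace (Lax z ^ (j - 1) * laxDeriv z v) := by
  choose D hD hD_apply using hasFDerivAt_Lax_pow_apply z j
  have hF : HasFDerivAt (F j) ((1 / j : ℝ) • ∑ r, D r r) z :=
    (HasFDerivAt.fun_sum fun r _ => hD r r).const_mul (1 / j : ℝ)
  simp only [hF.fderiv, _root_.smul_apply, FunLike.coe_sum, Finset.sum_apply, hD_apply,
    smul_eq_mul]
  rw [mul_assoc, ← trace_sum_pow_mul_mul_pow]
  rfl

lemma trace_mul_laxDeriv_snd_single (A : Matrix (Fin n) (Fin n) ℝ)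
    (z : (Fin n → ℝ) × (Fin n → ℝ)) (m : Fin n) :
    trace (A * laxDeriv z (0, Pi.single m 1)) = A m m := by
  simp [laxDeriv, trace_mul_cyclicTridiag, Pi.single_apply]

lemma trace_mul_laxDeriv_fst_single {A : Matrix (Fin n) (Fin n) ℝ} (hA : A.IsSymm)
    (z : (Fin n → ℝ) × (Fin n → ℝ)) (m : Fin n) :
    trace (A * laxDeriv z (Pi.single m 1, 0)) =
      bfun z m * A m (m + 1) - bfun z (m - 1) * A (m - 1) m := by
  have sym (r : Fin n) : A (r + 1) r = A r (r + 1) := hA.apply r (r + 1)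
  simp only [laxDeriv, trace_mul_cyclicTridiag, Pi.zero_apply, mul_zero, zero_add, sym]
  calc _ = ∑ r, (bfun z r * A r (r + 1) * (Pi.single m 1 : Fin n → ℝ) r
        - bfun z r * A r (r + 1) * (Pi.single m 1 : Fin n → ℝ) (r + 1)) :=
        Finset.sum_congr rfl fun r _ => by ring
    _ = _ := by
        simp only [Finset.sum_sub_distrib, Pi.single_apply, mul_ite, mul_one, mul_zero,
          Finset.sum_ite_eq', Finset.mem_univ, if_true, Fin.sum_ite_add_one_eq, sub_add_cancel]

end LaxDerivative

theorem stmt5_general (n : ℕ) [NeZero n] (j k : ℕ) (z : (Fin n → ℝ) × (Fin n → ℝ)) :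
    pb (F (n := n) j) (F k) z = 0 := by
  have hL : Commute (cyclicTridiag z.2 (bfun z)) (Lax z) := Commute.refl _
  have hA : (Lax z ^ (j - 1)).IsSymm := (isSymm_cyclicTridiag _ _).pow _
  have hB : (Lax z ^ (k - 1)).IsSymm := (isSymm_cyclicTridiag _ _).pow _
  have bracket := sum_bracket_eq_zero_of_commute hA hB (hL.pow_right _) (hL.pow_right _)
    ((Commute.refl (Lax z)).pow_pow _ _)
  simp only [pb, fderiv_F_apply, trace_mul_laxDeriv_fst_single hA,
    trace_mul_laxDeriv_fst_single hB, trace_mul_laxDeriv_snd_single]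
  rw [← mul_zero ((1 / j * j : ℝ) * (1 / k * k)), ← bracket, Finset.mul_sum]
  exact Finset.sum_congr rfl fun m _ => by ring

/-- the integrals F_1, …, F_n are in involution. -/
theorem stmt5 (n : ℕ) [NeZero n] (hn : 2 ≤ n) (j k : ℕ) (hj1 : 1 ≤ j) (hjn : j ≤ n)
    (hk1 : 1 ≤ k) (hkn : k ≤ n) (z : (Fin n → ℝ) × (Fin n → ℝ)) :
    pb (F (n := n) j) (F k) z = 0 :=
  stmt5_general n j k z
end

section
/- For a phase-space point z = (q, p) ∈ ℝ^{2n}, the corank of dF(z), i.e. n − rank(dF(z)), equals n − 1 if and only if q_1 = q_2 = ⋯ = q_n and p_1 = p_2 = ⋯ = p_n. (Thus the corank-(n−1) singular set of the Toda chain is exactly the set of relative equilibria with equal positions and equal momenta.) -/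
open Matrix BigOperators

/-!
`F₁ = ∑ pᵣ` and `F₂ = ½ ∑ pᵣ² + ∑ exp (qᵣ - qᵣ₊₁) + const`. If `dF(z)` has rank one, then
`dF₂(z)` vanishes on `ker dF₁(z) = {∑ δpᵣ = 0}`; this forces all `pᵣ` to be equal and all
`exp (qᵣ - qᵣ₊₁)` to be equal, and since the cyclic differences `qᵣ - qᵣ₊₁` sum to zero they all
vanish. Conversely, if all `qᵣ` and all `pᵣ` are equal, then `z` is fixed by the cyclic shift of
indices, which preserves every `Fₖ`, and every `Fₖ` is invariant under the translation
`q ↦ q + t (1, …, 1)`. Hence each `dFₖ(z)` is a multiple of `∑ δpᵣ`, and `dF(z)` has rank one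
because `dF₁(z) ≠ 0`.
-/

lemma LinearMap.apply_eq_zero_of_finrank_range_le_one {K V ι : Type*} [Field K] [AddCommGroup V]
    [Module K V] [Finite ι] (Φ : V →ₗ[K] ι → K) (h : Module.finrank K (LinearMap.range Φ) ≤ 1)
    {i : ι} {x v : V} (hx : Φ x i ≠ 0) (hv : Φ v i = 0) : Φ v = 0 := by
  obtain ⟨w, hw⟩ := finrank_le_one_iff.mp h
  obtain ⟨a, ha⟩ := hw ⟨Φ x, x, rfl⟩
  obtain ⟨b, hb⟩ := hw ⟨Φ v, v, rfl⟩
  have ha' : a • (w : ι → K) = Φ x := congrArg Subtype.val ha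
  have hb' : b • (w : ι → K) = Φ v := congrArg Subtype.val hb
  have hwi : (w : ι → K) i ≠ 0 := fun h0 => hx (by simp [← ha', h0])
  have hb0 : b = 0 := by
    have := congrFun hb' i
    simp only [Pi.smul_apply, smul_eq_mul, hv] at this
    exact (mul_eq_zero.mp this).resolve_right hwi
  rw [← hb', hb0, zero_smul]

lemma eq_of_forall_sum_eq_zero_sum_mul_eq_zero {R ι : Type*} [CommRing R] [Fintype ι]
    [DecidableEq ι] {a : ι → R} (h : ∀ w : ι → R, ∑ k, w k = 0 → ∑ k, a k * w k = 0) (i j : ι) :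
    a i = a j := by
  have := h (Pi.single i 1 - Pi.single j 1) (by simp)
  simpa [Pi.single_apply, mul_sub, Finset.sum_sub_distrib, sub_eq_zero] using this

section CyclicIndices

variable {n : ℕ} [NeZero n]

lemma Fin.apply_eq_apply_zero_of_apply_add_one {α : Type*} {f : Fin n → α}
    (h : ∀ j, f (j + 1) = f j) (i : Fin n) : f i = f 0 := by
  obtain ⟨m, rfl⟩ := Nat.exists_eq_succ_of_ne_zero (NeZero.ne n)
  induction i using Fin.induction with
  | zero => rfl
  | succ i ih => rw [← Fin.coeSucc_eq_succ, h, ih]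

lemma Fin.sum_apply_add_one {M : Type*} [AddCommMonoid M] (f : Fin n → M) :
    ∑ j, f (j + 1) = ∑ j, f j :=
  Equiv.sum_comp (Equiv.addRight 1) f

lemma eq_of_sub_apply_add_one_eq {M : Type*} [AddCommGroup M] [IsAddTorsionFree M]
    {q : Fin n → M} (h : ∀ j, q (j + 1) - q (j + 1 + 1) = q j - q (j + 1)) (i j : Fin n) :
    q i = q j := by
  have hd : ∀ j, q j - q (j + 1) = q 0 - q (0 + 1) :=
    Fin.apply_eq_apply_zero_of_apply_add_one (f := fun j => q j - q (j + 1)) h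
  have hsum : ∑ j, (q j - q (j + 1)) = 0 := by
    rw [Finset.sum_sub_distrib, Fin.sum_apply_add_one, sub_self]
  simp only [hd, Finset.sum_const, Finset.card_univ, Fintype.card_fin] at hsum
  have hstep : ∀ j, q (j + 1) = q j := fun j => by
    rw [eq_comm, ← sub_eq_zero, hd, (nsmul_eq_zero_iff.mp hsum).resolve_right (NeZero.ne n)]
  rw [Fin.apply_eq_apply_zero_of_apply_add_one hstep i,
    Fin.apply_eq_apply_zero_of_apply_add_one hstep j]

lemma apply_add_one_eq_of_forall_sum_mul_sub_eq_zero {R : Type*} [CommRing R] {c : Fin n → R}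
    (h : ∀ u : Fin n → R, ∑ r, c r * (u r - u (r + 1)) = 0) (j : Fin n) : c (j + 1) = c j := by
  have hshift : ∀ r, (Pi.single (j + 1) 1 : Fin n → R) (r + 1) = (Pi.single j 1 : Fin n → R) r :=
    fun r => by simp only [Pi.single_apply, add_left_inj]
  have := h (Pi.single (j + 1) 1)
  simpa [hshift, Pi.single_apply, mul_sub, Finset.sum_sub_distrib, sub_eq_zero] using this

lemma LinearMap.apply_eq_sum_mul_of_apply_add_one {R : Type*} [CommSemiring R]
    (φ : (Fin n → R) →ₗ[R] R) (h : ∀ v, φ (fun j => v (j + 1)) = φ v) (v : Fin n → R) :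
    φ v = (∑ j, v j) * φ (Pi.single 0 1) := by
  have hconst : ∀ i, φ (Pi.single i 1) = φ (Pi.single 0 1) :=
    Fin.apply_eq_apply_zero_of_apply_add_one fun i => by
      rw [← h]; congr 1; ext r; simp only [Pi.single_apply, add_left_inj]
  conv_lhs => rw [pi_eq_sum_univ' v]
  simp [map_sum, hconst, Finset.sum_mul]

end CyclicIndices

section Calculus

variable {𝕜 E F : Type*} [NontriviallyNormedField 𝕜] [NormedAddCommGroup E] [NormedSpace 𝕜 E]
  [NormedAddCommGroup F] [NormedSpace 𝕜 F] {f : E → F} {z : E}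

lemma fderiv_comp_eq_of_comp_eq (A : E →L[𝕜] E) (hf : f ∘ A = f) (hz : A z = z)
    (hd : DifferentiableAt 𝕜 f z) : (fderiv 𝕜 f z).comp A = fderiv 𝕜 f z := by
  have := fderiv_comp z (hz.symm ▸ hd) A.differentiableAt
  rwa [hf, hz, A.fderiv, eq_comm] at this

lemma fderiv_apply_eq_zero_of_add_smul {v : E} (hf : ∀ t : 𝕜, f (z + t • v) = f z)
    (hd : DifferentiableAt 𝕜 f z) : fderiv 𝕜 f z v = 0 := by
  rw [← hd.lineDeriv_eq_fderiv, lineDeriv, funext hf, deriv_const]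

end Calculus

abbrev PhaseSpace (n : ℕ) : Type := (Fin n → ℝ) × (Fin n → ℝ)

lemma hasFDerivAt_fst_apply {n : ℕ} (r : Fin n) (z : PhaseSpace n) :
    HasFDerivAt (fun z : PhaseSpace n => z.1 r)
      (ContinuousLinearMap.proj r ∘L ContinuousLinearMap.fst ℝ _ _) z :=
  (ContinuousLinearMap.proj (R := ℝ) r ∘L
    ContinuousLinearMap.fst ℝ (Fin n → ℝ) (Fin n → ℝ)).hasFDerivAt (x := z)

lemma hasFDerivAt_snd_apply {n : ℕ} (r : Fin n) (z : PhaseSpace n) :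
    HasFDerivAt (fun z : PhaseSpace n => z.2 r)
      (ContinuousLinearMap.proj r ∘L ContinuousLinearMap.snd ℝ _ _) z :=
  (ContinuousLinearMap.proj (R := ℝ) r ∘L
    ContinuousLinearMap.snd ℝ (Fin n → ℝ) (Fin n → ℝ)).hasFDerivAt (x := z)

section TodaLattice

variable {n : ℕ} [NeZero n]

lemma Fin.add_one_ne_self (hn : 2 ≤ n) (r : Fin n) : r + 1 ≠ r := by
  obtain ⟨m, rfl⟩ : ∃ m, n = m + 1 + 1 := ⟨n - 2, by omega⟩
  rw [Ne, add_eq_left, Fin.one_eq_zero_iff]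
  omega

lemma Lax_apply_comm (z : PhaseSpace n) (r s : Fin n) : Lax z r s = Lax z s r := by
  unfold Lax
  obtain rfl | hrs := eq_or_ne r s
  · rfl
  · rw [if_neg hrs, if_neg hrs.symm, zero_add, zero_add, add_comm]

lemma Lax_apply_self (hn : 2 ≤ n) (z : PhaseSpace n) (r : Fin n) : Lax z r r = z.2 r := by
  simp [Lax, Fin.add_one_ne_self hn]

lemma bfun_sq (z : PhaseSpace n) (j : Fin n) :
    bfun z j ^ 2 = Real.exp (z.1 j - z.1 (j + 1)) := by
  rw [bfun, ← Real.exp_nat_mul]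
  ring_nf

-- For `n = 2` both off-diagonal conditions hold, and the cross term is `2 b₁ b₂ = 2`.
lemma Lax_apply_sq (hn : 2 ≤ n) (z : PhaseSpace n) (r s : Fin n) :
    Lax z r s ^ 2 = (if r = s then z.2 r ^ 2 else 0) +
      (if r + 1 = s then Real.exp (z.1 r - z.1 (r + 1)) else 0) +
      (if s + 1 = r then Real.exp (z.1 s - z.1 (s + 1)) else 0) +
      (if r + 1 = s ∧ s + 1 = r then 2 else 0) := by
  rw [Lax]
  obtain rfl | hrs := eq_or_ne r s
  · simp [Fin.add_one_ne_self hn]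
  by_cases h1 : r + 1 = s <;> by_cases h2 : s + 1 = r
  rotate_left
  · subst h1; simp [hrs, h2, bfun_sq]
  · subst h2; simp [hrs, h1, bfun_sq]
  · simp [hrs, h1, h2]
  subst h1
  have hprod : bfun z r * bfun z (r + 1) = 1 := by
    rw [bfun, bfun, ← Real.exp_add, h2, ← Real.exp_zero]
    ring_nf
  have hsq := bfun_sq z (r + 1)
  rw [h2] at hsq
  simp only [hrs, h2, if_true, if_false, and_self, zero_add]
  linear_combination 2 * hprod + bfun_sq z r + hsq

section Differentiability

attribute [local instance] Matrix.linftyOpNormedRing Matrix.linftyOpNormedAlgebra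

lemma differentiable_Lax : Differentiable ℝ (Lax : PhaseSpace n → Matrix (Fin n) (Fin n) ℝ) :=
  differentiable_pi.2 fun r => differentiable_pi.2 fun s => by
    unfold Lax bfun
    split_ifs <;> fun_prop

lemma differentiable_F (k : ℕ) : Differentiable ℝ (F k : PhaseSpace n → ℝ) := by
  have hpow := (differentiable_Lax (n := n)).pow k
  exact (Differentiable.fun_sum fun i _ =>
    differentiable_pi.1 (differentiable_pi.1 hpow i) i).const_mul _

end Differentiability

lemma fderiv_Fvec_apply (z v : PhaseSpace n) (j : Fin n) :
    fderiv ℝ Fvec z v j = fderiv ℝ (F (j.val + 1)) z v := by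
  have hF : (Fvec : PhaseSpace n → Fin n → ℝ) = fun z j => F (j.val + 1) z := rfl
  rw [hF, fderiv_pi (φ := fun (j : Fin n) z => F (j.val + 1) z) fun j => differentiable_F _ z]
  rfl

lemma F_one_eq (hn : 2 ≤ n) : (F 1 : PhaseSpace n → ℝ) = fun z => ∑ r, z.2 r := by
  ext z
  simp [F, Matrix.trace, Lax_apply_self hn]

lemma fderiv_F_one_apply (hn : 2 ≤ n) (z v : PhaseSpace n) :
    fderiv ℝ (F 1) z v = ∑ r, v.2 r := by
  rw [F_one_eq hn, (HasFDerivAt.fun_sum fun r _ => hasFDerivAt_snd_apply r z).fderiv]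
  simp

noncomputable def todaHamiltonian (z : PhaseSpace n) : ℝ :=
  ∑ r, (z.2 r ^ 2 / 2 + Real.exp (z.1 r - z.1 (r + 1)))

lemma F_two_eq (hn : 2 ≤ n) (z : PhaseSpace n) :
    F 2 z = todaHamiltonian z + (Finset.univ.filter fun r : Fin n => r + 1 + 1 = r).card := by
  have htr : (Lax z ^ 2).trace = ∑ r, ∑ s, Lax z r s ^ 2 := by
    simp only [Matrix.trace, Matrix.diag, sq, Matrix.mul_apply, Lax_apply_comm z _ _]
  have hcard : (∑ r : Fin n, if r + 1 + 1 = r then (2 : ℝ) else 0) =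
      2 * (Finset.univ.filter fun r : Fin n => r + 1 + 1 = r).card := by
    rw [← Finset.sum_filter, Finset.sum_const, nsmul_eq_mul, mul_comm]
  rw [F, htr, todaHamiltonian]
  simp only [Lax_apply_sq hn, Finset.sum_add_distrib, ite_and]
  rw [Finset.sum_comm (f := fun r s => if s + 1 = r then _ else _)]
  simp only [Finset.sum_ite_eq, Finset.mem_univ, if_true, hcard]
  rw [← Finset.sum_div]
  push_cast
  ring

lemma fderiv_todaHamiltonian_apply (z v : PhaseSpace n) :
    fderiv ℝ todaHamiltonian z v =
      ∑ r, (z.2 r * v.2 r + Real.exp (z.1 r - z.1 (r + 1)) * (v.1 r - v.1 (r + 1))) := by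
  have h := HasFDerivAt.fun_sum (u := Finset.univ) fun r _ =>
    (((hasFDerivAt_snd_apply r z).pow 2).mul_const (1 / 2 : ℝ)).fun_add
      ((hasFDerivAt_fst_apply r z).fun_sub (hasFDerivAt_fst_apply (r + 1) z)).exp
  simp only [mul_one_div] at h
  unfold todaHamiltonian
  rw [h.fderiv, _root_.sum_apply]
  refine Finset.sum_congr rfl fun r _ => ?_
  simp [mul_assoc]

lemma fderiv_F_two_apply (hn : 2 ≤ n) (z v : PhaseSpace n) :
    fderiv ℝ (F 2) z v =
      ∑ r, (z.2 r * v.2 r + Real.exp (z.1 r - z.1 (r + 1)) * (v.1 r - v.1 (r + 1))) := by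
  rw [funext (F_two_eq hn), fderiv_add_const, fderiv_todaHamiltonian_apply]

noncomputable def cyclicShift : PhaseSpace n →L[ℝ] PhaseSpace n where
  toFun z := (fun j => z.1 (j + 1), fun j => z.2 (j + 1))
  map_add' _ _ := rfl
  map_smul' _ _ := rfl
  cont := by fun_prop

lemma Lax_cyclicShift (z : PhaseSpace n) :
    Lax (cyclicShift z) = (Lax z).submatrix (· + 1) (· + 1) := by
  ext r s
  simp [Lax, bfun, cyclicShift]

lemma F_comp_cyclicShift (k : ℕ) : F k ∘ cyclicShift = (F k : PhaseSpace n → ℝ) := by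
  ext z
  have hpow : Lax (cyclicShift z) ^ k = (Lax z ^ k).submatrix (· + 1) (· + 1) := by
    have := map_pow (Matrix.reindexAlgEquiv ℝ ℝ (Equiv.addRight (1 : Fin n)).symm) (Lax z) k
    simpa [Lax_cyclicShift] using this.symm
  simp only [Function.comp_apply, F, hpow, Matrix.trace, Matrix.diag, Matrix.submatrix_apply]
  rw [Fin.sum_apply_add_one (fun i => (Lax z ^ k) i i)]

lemma F_add_smul_one_zero (k : ℕ) (z : PhaseSpace n) (t : ℝ) :
    F k (z + t • ((1 : Fin n → ℝ), (0 : Fin n → ℝ))) = F k z := by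
  have hLax : Lax (z + t • ((1 : Fin n → ℝ), (0 : Fin n → ℝ))) = Lax z := by
    ext r s
    simp [Lax, bfun]
  rw [F, F, hLax]

lemma ContinuousLinearMap.apply_eq_sum_snd_mul_of_comp_cyclicShift
    (φ : PhaseSpace n →L[ℝ] ℝ) (hshift : φ.comp cyclicShift = φ)
    (htrans : φ ((1 : Fin n → ℝ), (0 : Fin n → ℝ)) = 0) (v : PhaseSpace n) :
    φ v = (∑ j, v.2 j) * φ (0, Pi.single 0 1) := by
  have hfst : ∀ u, φ (u, 0) = (∑ j, u j) * φ (Pi.single 0 1, 0) :=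
    LinearMap.apply_eq_sum_mul_of_apply_add_one (φ.toLinearMap ∘ₗ LinearMap.inl ℝ _ _)
      fun u => DFunLike.congr_fun hshift (u, 0)
  have hsnd : ∀ u, φ (0, u) = (∑ j, u j) * φ (0, Pi.single 0 1) :=
    LinearMap.apply_eq_sum_mul_of_apply_add_one (φ.toLinearMap ∘ₗ LinearMap.inr ℝ _ _)
      fun u => DFunLike.congr_fun hshift (0, u)
  have hfst_zero : φ (Pi.single 0 1, 0) = 0 := by
    simpa [htrans, NeZero.ne n] using (hfst 1).symm
  calc φ v = φ (v.1, 0) + φ (0, v.2) := by rw [← map_add, Prod.mk_add_mk, add_zero, zero_add]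
    _ = (∑ j, v.2 j) * φ (0, Pi.single 0 1) := by rw [hfst, hsnd, hfst_zero, mul_zero, zero_add]

lemma fderiv_F_apply_eq_of_const {z : PhaseSpace n} (hq : ∀ i j, z.1 i = z.1 j)
    (hp : ∀ i j, z.2 i = z.2 j) (k : ℕ) (v : PhaseSpace n) :
    fderiv ℝ (F k) z v = (∑ j, v.2 j) * fderiv ℝ (F k) z (0, Pi.single 0 1) := by
  have hfix : cyclicShift z = z := Prod.ext (funext fun _ => hq _ _) (funext fun _ => hp _ _)
  refine ContinuousLinearMap.apply_eq_sum_snd_mul_of_comp_cyclicShift _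
    (fderiv_comp_eq_of_comp_eq _ (F_comp_cyclicShift k) hfix (differentiable_F k z))
    (fderiv_apply_eq_zero_of_add_smul (F_add_smul_one_zero k z) (differentiable_F k z)) v

lemma const_of_finrank_range_fderiv_Fvec_le_one (hn : 2 ≤ n) (z : PhaseSpace n)
    (h : Module.finrank ℝ (LinearMap.range (fderiv ℝ Fvec z).toLinearMap) ≤ 1) :
    (∀ i j, z.1 i = z.1 j) ∧ (∀ i j, z.2 i = z.2 j) := by
  have hF2 : ∀ v : PhaseSpace n, ∑ j, v.2 j = 0 → fderiv ℝ (F 2) z v = 0 := fun v hv => by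
    have hx : (fderiv ℝ Fvec z).toLinearMap (0, Pi.single 0 1) 0 ≠ 0 := by
      simp [fderiv_Fvec_apply, fderiv_F_one_apply hn]
    have := LinearMap.apply_eq_zero_of_finrank_range_le_one _ h hx (v := v)
      (by simpa [fderiv_Fvec_apply, fderiv_F_one_apply hn] using hv)
    simpa [fderiv_Fvec_apply] using congrFun this ⟨1, hn⟩
  refine ⟨eq_of_sub_apply_add_one_eq fun j => ?_,
    eq_of_forall_sum_eq_zero_sum_mul_eq_zero fun w hw => ?_⟩
  · refine Real.exp_injective (apply_add_one_eq_of_forall_sum_mul_sub_eq_zero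
      (c := fun r => Real.exp (z.1 r - z.1 (r + 1))) (fun u => ?_) j)
    simpa [fderiv_F_two_apply hn] using hF2 (u, 0) (by simp)
  · simpa [fderiv_F_two_apply hn] using hF2 (0, w) hw

lemma finrank_range_fderiv_Fvec_eq_one_of_const (hn : 2 ≤ n) {z : PhaseSpace n}
    (hq : ∀ i j, z.1 i = z.1 j) (hp : ∀ i j, z.2 i = z.2 j) :
    Module.finrank ℝ (LinearMap.range (fderiv ℝ Fvec z).toLinearMap) = 1 := by
  set c : Fin n → ℝ := fun j => fderiv ℝ (F (j.val + 1)) z (0, Pi.single 0 1)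
  have hrange : LinearMap.range (fderiv ℝ Fvec z).toLinearMap = ℝ ∙ c := by
    refine le_antisymm ?_ ((Submodule.span_singleton_le_iff_mem _ _).2
      ⟨(0, Pi.single 0 1), funext fun j => fderiv_Fvec_apply _ _ j⟩)
    rintro _ ⟨v, rfl⟩
    exact Submodule.mem_span_singleton.2 ⟨∑ j, v.2 j, funext fun j => by
      simp [c, fderiv_Fvec_apply, fderiv_F_apply_eq_of_const hq hp _ v]⟩
  have hc : c ≠ 0 := fun h0 => by simpa [c, fderiv_F_one_apply hn] using congrFun h0 0
  rw [hrange, finrank_span_singleton hc]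

end TodaLattice

/-- corank dF(z) = n−1 iff all positions are equal and all momenta
are equal. -/
theorem stmt9 (n : ℕ) [NeZero n] (hn : 2 ≤ n) (z : (Fin n → ℝ) × (Fin n → ℝ)) :
    corank n z = n - 1 ↔
      (∀ i j : Fin n, z.1 i = z.1 j) ∧ (∀ i j : Fin n, z.2 i = z.2 j) := by
  have hle : Module.finrank ℝ (LinearMap.range (fderiv ℝ Fvec z).toLinearMap) ≤ n :=
    (Submodule.finrank_le _).trans_eq (Module.finrank_fin_fun ℝ)
  rw [corank]
  constructor
  · intro h
    exact const_of_finrank_range_fderiv_Fvec_le_one hn z (by omega)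
  · rintro ⟨hq, hp⟩
    rw [finrank_range_fderiv_Fvec_eq_one_of_const hn hq hp]
end

section
/- Let z = (q, p) ∈ ℝ^{2n} with q_1 = ⋯ = q_n and p_1 = ⋯ = p_n. Then L(z) has exactly ⌊(n−1)/2⌋ distinct real eigenvalues whose eigenspace is two-dimensional, and L̄(z) has exactly ⌊n/2⌋ distinct real eigenvalues whose eigenspace is two-dimensional; in particular these numbers sum to n − 1. -/
open Matrix BigOperators

/-!
When all `q_j` agree and all `p_j` equal `p`, every `b_j` equals `1`, so `L = p • 1 + A₁` and
`L̄ = p • 1 + A₋₁`, where `A_ε` is the adjacency matrix of the `n`-cycle whose edge `{n, 1}`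
carries the weight `ε`. A kernel vector of `A_ε - x • 1` is the restriction of a solution of
`w (j + 2) = x * w (j + 1) - w j` with `w (j + n) = ε * w j`, and the solutions of the recurrence
are combinations of the rescaled Chebyshev polynomials `S_j(x)`. Hence the eigenspace is
two-dimensional exactly when `S_{n-1}(x) = 0` and `S_n(x) = ε`, that is `x = 2 cos (m π / n)`
with `0 < m < n` and `(-1) ^ m = ε`. Counting the even and the odd such `m` gives `⌊(n - 1) / 2⌋`
and `⌊n / 2⌋`.
-/

open Polynomial Polynomial.Chebyshev Real Finset

noncomputable def chebSol (x a b : ℝ) (j : ℕ) : ℝ :=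
  b * (S ℝ (j - 1)).eval x - a * (S ℝ (j - 2)).eval x

@[simp] theorem chebSol_zero (x a b : ℝ) : chebSol x a b 0 = a := by
  simp [chebSol, S_neg_one, S_neg_two]

@[simp] theorem chebSol_one (x a b : ℝ) : chebSol x a b 1 = b := by
  simp [chebSol, S_neg_one]

theorem chebSol_add_two (x a b : ℝ) (j : ℕ) :
    chebSol x a b (j + 2) = x * chebSol x a b (j + 1) - chebSol x a b j := by
  have h1 := S_add_one ℝ (j : ℤ)
  have h0 := S_eq ℝ (j : ℤ)
  simp only [chebSol, Nat.cast_add, Nat.cast_ofNat, Nat.cast_one, add_sub_cancel_right,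
    show (j : ℤ) + 2 - 1 = j + 1 by ring, show (j : ℤ) + 2 - 2 = j by ring,
    show (j : ℤ) + 1 - 2 = j - 1 by ring, h1, h0, eval_sub, eval_mul, eval_X]
  ring

theorem eq_chebSol_of_recurrence {N : ℕ} {x : ℝ} {f : ℕ → ℝ}
    (hf : ∀ j, j + 2 < N → f (j + 2) = x * f (j + 1) - f j) :
    ∀ j < N, f j = chebSol x (f 0) (f 1) j
  | 0, _ => (chebSol_zero ..).symm
  | 1, _ => (chebSol_one ..).symm
  | j + 2, hj => by
    rw [hf j hj, chebSol_add_two, eq_chebSol_of_recurrence hf (j + 1) (by omega),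
      eq_chebSol_of_recurrence hf j (by omega)]

theorem forall_chebSol_twisted_iff (x ε : ℝ) (n : ℕ) :
    (∀ a b, chebSol x a b n = ε * a ∧ chebSol x a b (n + 1) = ε * b) ↔
      (S ℝ (n - 1)).eval x = 0 ∧ (S ℝ n).eval x = ε := by
  have hsub : (S ℝ (n - 2)).eval x = x * (S ℝ (n - 1)).eval x - (S ℝ n).eval x := by
    simp [S_sub_two]
  simp only [chebSol, Nat.cast_add, Nat.cast_one, add_sub_cancel_right,
    show (n : ℤ) + 1 - 2 = n - 1 by ring]
  constructor
  · intro h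
    obtain ⟨h0, h1⟩ := h 0 1
    constructor <;> linarith
  · rintro ⟨h0, h1⟩ a b
    rw [hsub, h0, h1]
    constructor <;> ring

theorem eval_S_two_mul_cos_pi_div {m n : ℕ} (hm : 0 < m) (hmn : m < n) :
    (S ℝ (n - 1)).eval (2 * cos (m * π / n)) = 0 ∧
      (S ℝ n).eval (2 * cos (m * π / n)) = (-1) ^ m := by
  have hn : (0 : ℝ) < n := by exact_mod_cast hm.trans hmn
  have hsin : 0 < sin (m * π / n) := by
    apply sin_pos_of_pos_of_lt_pi (by positivity)
    rw [div_lt_iff₀ hn]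
    have : (m : ℝ) < n := by exact_mod_cast hmn
    nlinarith [pi_pos]
  have hturn : (n : ℝ) * (m * π / n) = m * π := by field_simp
  have h0 := S_two_mul_real_cos (m * π / n) (n - 1)
  have h1 := S_two_mul_real_cos (m * π / n) n
  push_cast at h0 h1
  rw [sub_add_cancel, hturn, sin_nat_mul_pi] at h0
  rw [add_mul, one_mul, hturn, add_comm, sin_add_nat_mul_pi] at h1
  exact ⟨(mul_eq_zero.1 h0).resolve_right hsin.ne', mul_right_cancel₀ hsin.ne' h1⟩

theorem exists_eq_two_mul_cos_of_eval_S {n : ℕ} {x : ℝ} (hn : 0 < n)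
    (hx : (S ℝ (n - 1)).eval x = 0) : ∃ m ∈ Ico 1 n, x = 2 * cos (m * π / n) := by
  obtain ⟨N, rfl⟩ : ∃ N, n = N + 1 := ⟨n - 1, by omega⟩
  have hroot : x / 2 ∈ (U ℝ N).roots := by
    rw [mem_roots (U_ne_zero ℝ N (by omega)), IsRoot.def]
    simpa [S_eq_U_comp_half_mul_X, eval_comp, div_eq_inv_mul] using hx
  rw [roots_U_real, mem_val, mem_image] at hroot
  obtain ⟨k, hk, hkx⟩ := hroot
  refine ⟨k + 1, by simp at hk ⊢; omega, ?_⟩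
  push_cast
  linarith

theorem eval_S_pred_eq_zero_and_eval_S_eq_iff {n : ℕ} (hn : 0 < n) (ε x : ℝ) :
    (S ℝ (n - 1)).eval x = 0 ∧ (S ℝ n).eval x = ε ↔
      ∃ m ∈ Ico 1 n, (-1) ^ m = ε ∧ 2 * cos (m * π / n) = x := by
  constructor
  · rintro ⟨h0, h1⟩
    obtain ⟨m, hm, rfl⟩ := exists_eq_two_mul_cos_of_eval_S hn h0
    rw [mem_Ico] at hm
    exact ⟨m, mem_Ico.2 hm, by rw [← h1, (eval_S_two_mul_cos_pi_div hm.1 hm.2).2], rfl⟩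
  · rintro ⟨m, hm, rfl, rfl⟩
    rw [mem_Ico] at hm
    exact eval_S_two_mul_cos_pi_div hm.1 hm.2

theorem injOn_two_mul_cos_pi_div (n : ℕ) :
    Set.InjOn (fun m : ℕ => 2 * cos (m * π / n)) (Ico 1 n) := by
  intro k hk m hm hkm
  rw [coe_Ico] at hk hm
  have hn : (0 : ℝ) < n := by exact_mod_cast (zero_lt_one.trans_le hk.1).trans hk.2
  have hIcc (j : ℕ) (hj : j ∈ Set.Ico 1 n) : (j : ℝ) * π / n ∈ Set.Icc 0 π := by
    refine ⟨by positivity, ?_⟩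
    rw [div_le_iff₀ hn]
    have : (j : ℝ) ≤ n := by exact_mod_cast hj.2.le
    nlinarith [pi_pos]
  have h := injOn_cos (hIcc k hk) (hIcc m hm) (by simpa using hkm)
  field_simp at h
  exact_mod_cast h

theorem card_filter_even_Ico_one (n : ℕ) : #{m ∈ Ico 1 n | Even m} = (n - 1) / 2 := by
  induction n with
  | zero => rfl
  | succ n ih =>
    rcases Nat.eq_zero_or_pos n with rfl | hn
    · rfl
    rw [Nat.Ico_succ_right_eq_insert_Ico hn, filter_insert]
    split_ifs with he
    · rw [card_insert_of_notMem (by simp), ih]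
      obtain ⟨k, rfl⟩ := he
      omega
    · rw [ih]
      obtain ⟨k, rfl⟩ := Nat.not_even_iff_odd.1 he
      omega

theorem card_filter_odd_Ico_one (n : ℕ) : #{m ∈ Ico 1 n | Odd m} = n / 2 := by
  induction n with
  | zero => rfl
  | succ n ih =>
    rcases Nat.eq_zero_or_pos n with rfl | hn
    · rfl
    rw [Nat.Ico_succ_right_eq_insert_Ico hn, filter_insert]
    split_ifs with ho
    · rw [card_insert_of_notMem (by simp), ih]
      obtain ⟨k, rfl⟩ := ho
      omega
    · rw [ih]
      obtain ⟨k, rfl⟩ := Nat.not_odd_iff_even.1 ho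
      omega

theorem LinearMap.finrank_eq_iff_surjective_of_injective {K V W : Type*} [DivisionRing K]
    [AddCommGroup V] [Module K V] [FiniteDimensional K V]
    [AddCommGroup W] [Module K W] [FiniteDimensional K W]
    {f : V →ₗ[K] W} (hf : Function.Injective f) :
    Module.finrank K V = Module.finrank K W ↔ Function.Surjective f :=
  ⟨fun h => (LinearMap.injective_iff_surjective_of_finrank_eq_finrank h).1 hf,
    fun hs => (LinearEquiv.ofBijective f ⟨hf, hs⟩).finrank_eq⟩

theorem nuCount_add_smul_one {n : ℕ} (A : Matrix (Fin n) (Fin n) ℝ) (c : ℝ) :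
    nuCount (A + c • 1) = nuCount A := by
  have hshift (μ : ℝ) : A + c • (1 : Matrix (Fin n) (Fin n) ℝ) - μ • 1 = A - (μ - c) • 1 := by
    module
  have h : {μ : ℝ | Module.finrank ℝ (LinearMap.ker (toLin' (A + c • 1 - μ • 1))) = 2} =
      (· + c) '' {μ : ℝ | Module.finrank ℝ (LinearMap.ker (toLin' (A - μ • 1))) = 2} := by
    ext μ
    refine ⟨fun hμ => ⟨μ - c, ?_, sub_add_cancel μ c⟩, ?_⟩
    · rwa [Set.mem_ofPred_eq, ← hshift]
    · rintro ⟨ν, hν, rfl⟩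
      rwa [Set.mem_ofPred_eq, hshift, add_sub_cancel_right]
  rw [nuCount, nuCount, h, Set.ncard_image_of_injective _ (add_left_injective c)]

def cycleWeight {n : ℕ} [NeZero n] (ε : ℝ) (r : Fin n) : ℝ := if r + 1 = 0 then ε else 1

def twistedCycleAdj (n : ℕ) [NeZero n] (ε : ℝ) : Matrix (Fin n) (Fin n) ℝ := fun r s =>
  (if r + 1 = s then cycleWeight ε r else 0) + (if s + 1 = r then cycleWeight ε s else 0)

section
variable {n : ℕ} [NeZero n]
open Fin.NatCast

theorem Fin.natCast_sub_one_add_one : ((n - 1 : ℕ) : Fin n) + 1 = 0 := by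
  rw [← Nat.cast_add_one, Nat.sub_add_cancel NeZero.one_le, Fin.natCast_self]

theorem cycleWeight_natCast {ε : ℝ} {j : ℕ} (hj : j < n) :
    cycleWeight ε (j : Fin n) = if j + 1 = n then ε else 1 := by
  have hwrap : ((j : Fin n) + 1 = 0) ↔ j + 1 = n := by
    rw [← Nat.cast_add_one, Fin.natCast_eq_zero]
    exact ⟨fun h => Nat.eq_of_dvd_of_lt_two_mul (by omega) h (by omega), fun h => h ▸ dvd_rfl⟩
  simp only [cycleWeight, hwrap]

theorem twistedCycleAdj_mulVec_add_one (ε : ℝ) (v : Fin n → ℝ) (r : Fin n) :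
    (twistedCycleAdj n ε *ᵥ v) (r + 1) =
      cycleWeight ε (r + 1) * v (r + 1 + 1) + cycleWeight ε r * v r := by
  simp only [twistedCycleAdj, mulVec, dotProduct, add_mul, sum_add_distrib, ite_mul,
    zero_mul, sum_ite_eq, mem_univ, if_true]
  simp_rw [add_left_inj, sum_ite_eq', mem_univ, if_true]

theorem twistedCycleAdj_sub_mulVec_eq_zero_iff (hn : 2 ≤ n) (ε x : ℝ) (v : Fin n → ℝ) :
    (twistedCycleAdj n ε - x • 1) *ᵥ v = 0 ↔
      (∀ j, j + 2 < n → v (j + 2 : ℕ) = x * v (j + 1 : ℕ) - v j) ∧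
      ε * v 0 = x * v (n - 1 : ℕ) - v (n - 2 : ℕ) ∧ ε * v (n - 1 : ℕ) = x * v 0 - v 1 := by
  set M := twistedCycleAdj n ε - x • 1
  have hrow (r : Fin n) : (M *ᵥ v) (r + 1) =
      cycleWeight ε (r + 1) * v (r + 1 + 1) + cycleWeight ε r * v r - x * v (r + 1) := by
    rw [sub_mulVec, smul_mulVec, one_mulVec, Pi.sub_apply, twistedCycleAdj_mulVec_add_one,
      Pi.smul_apply, smul_eq_mul]
  have hzero : cycleWeight ε (0 : Fin n) = 1 := by
    simpa [show 1 ≠ n by omega] using cycleWeight_natCast (n := n) (ε := ε) (j := 0) (by omega)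
  have hlast : cycleWeight ε ((n - 1 : ℕ) : Fin n) = ε := by
    rw [cycleWeight_natCast (by omega), if_pos (by omega)]
  have hsucc (j : ℕ) : (j : Fin n) + 1 = ((j + 1 : ℕ) : Fin n) := by push_cast; rfl
  have hinterior (j : ℕ) (hj : j + 2 < n) :
      (M *ᵥ v) ((j : Fin n) + 1) = 0 ↔ v (j + 2 : ℕ) = x * v (j + 1 : ℕ) - v j := by
    rw [hrow, hsucc, hsucc, cycleWeight_natCast (j := j + 1) (by omega),
      cycleWeight_natCast (j := j) (by omega), if_neg (by omega), if_neg (by omega)]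
    constructor <;> intro h <;> linarith
  have hpenult : (M *ᵥ v) (((n - 2 : ℕ) : Fin n) + 1) = 0 ↔
      ε * v 0 = x * v (n - 1 : ℕ) - v (n - 2 : ℕ) := by
    have e : ((n - 2 : ℕ) : Fin n) + 1 = ((n - 1 : ℕ) : Fin n) := by
      rw [hsucc]; congr 2; omega
    rw [hrow, e, Fin.natCast_sub_one_add_one, hlast,
      cycleWeight_natCast (j := n - 2) (by omega), if_neg (by omega)]
    constructor <;> intro h <;> linarith
  have hwrap : (M *ᵥ v) (((n - 1 : ℕ) : Fin n) + 1) = 0 ↔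
      ε * v (n - 1 : ℕ) = x * v 0 - v 1 := by
    rw [hrow, Fin.natCast_sub_one_add_one, zero_add, hzero, hlast]
    constructor <;> intro h <;> linarith
  have hrows : M *ᵥ v = 0 ↔ ∀ j < n, (M *ᵥ v) ((j : Fin n) + 1) = 0 := by
    rw [funext_iff, (Equiv.addRight (1 : Fin n)).surjective.forall]
    exact ⟨fun h j _ => h j, fun h r => by simpa using h r.val r.isLt⟩
  rw [hrows]
  refine ⟨fun h => ⟨fun j hj => (hinterior j hj).1 (h j (by omega)),
    hpenult.1 (h _ (by omega)), hwrap.1 (h _ (by omega))⟩, fun ⟨hint, hpen, hwr⟩ j hj => ?_⟩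
  obtain hj2 | rfl | rfl : j + 2 < n ∨ j = n - 2 ∨ j = n - 1 := by omega
  · exact (hinterior j hj2).2 (hint j hj2)
  · exact hpenult.2 hpen
  · exact hwrap.2 hwr

theorem twistedCycleAdj_sub_mulVec_eq_zero_iff_chebSol (hn : 2 ≤ n) {ε : ℝ} (hε : ε * ε = 1)
    (x : ℝ) (v : Fin n → ℝ) :
    (twistedCycleAdj n ε - x • 1) *ᵥ v = 0 ↔
      (∀ j : Fin n, v j = chebSol x (v 0) (v 1) j) ∧
      chebSol x (v 0) (v 1) n = ε * v 0 ∧ chebSol x (v 0) (v 1) (n + 1) = ε * v 1 := by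
  set w := chebSol x (v 0) (v 1)
  have hw_n : w n = x * w (n - 1) - w (n - 2) := by
    have h := chebSol_add_two x (v 0) (v 1) (n - 2)
    rwa [show n - 2 + 2 = n by omega, show n - 2 + 1 = n - 1 by omega] at h
  have hw_succ_n : w (n + 1) = x * w n - w (n - 1) := by
    have h := chebSol_add_two x (v 0) (v 1) (n - 1)
    rwa [show n - 1 + 2 = n + 1 by omega, show n - 1 + 1 = n by omega] at h
  rw [twistedCycleAdj_sub_mulVec_eq_zero_iff hn]
  constructor
  · rintro ⟨hint, hpenult, hwrap⟩
    have hv : ∀ j < n, v j = w j := by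
      simpa using eq_chebSol_of_recurrence (f := fun j : ℕ => v j) hint
    refine ⟨fun j => by simpa using hv j j.isLt, ?_, ?_⟩
    · rw [hw_n, ← hv _ (by omega), ← hv _ (by omega), hpenult]
    · rw [hw_succ_n, hw_n, ← hv _ (by omega), ← hv _ (by omega)]
      linear_combination -x * hpenult - ε * hwrap + v (n - 1 : ℕ) * hε
  · rintro ⟨hv, hw_n_eq, hw_succ_n_eq⟩
    have hv' : ∀ j < n, v j = w j := fun j hj => by
      simpa [Fin.val_cast_of_lt hj] using hv (j : Fin n)
    refine ⟨fun j hj => ?_, ?_, ?_⟩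
    · rw [hv' _ hj, hv' _ (by omega), hv' _ (by omega)]
      exact chebSol_add_two ..
    · rw [hv' _ (by omega), hv' _ (by omega), ← hw_n, hw_n_eq]
    · rw [hv' _ (by omega)]
      linear_combination
        ε * hw_succ_n + ε * x * hw_n_eq - ε * hw_succ_n_eq + (x * v 0 - v 1) * hε

theorem finrank_ker_twistedCycleAdj_sub_eq_two_iff (hn : 2 ≤ n) {ε : ℝ} (hε : ε * ε = 1)
    (x : ℝ) :
    Module.finrank ℝ (LinearMap.ker (toLin' (twistedCycleAdj n ε - x • 1))) = 2 ↔
      ∀ a b, chebSol x a b n = ε * a ∧ chebSol x a b (n + 1) = ε * b := by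
  set K := LinearMap.ker (toLin' (twistedCycleAdj n ε - x • 1))
  have hK (v : Fin n → ℝ) : v ∈ K ↔ (twistedCycleAdj n ε - x • 1) *ᵥ v = 0 := by
    rw [LinearMap.mem_ker, toLin'_apply]
  let φ : K →ₗ[ℝ] ℝ × ℝ :=
    ((LinearMap.proj (0 : Fin n)).prod (LinearMap.proj (1 : Fin n))).comp K.subtype
  have hφ (v : K) : φ v = ((v : Fin n → ℝ) 0, (v : Fin n → ℝ) 1) := rfl
  have hφ_inj : Function.Injective φ := by
    rw [← LinearMap.ker_eq_bot, Submodule.eq_bot_iff]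
    rintro ⟨v, hvK⟩ hv
    rw [LinearMap.mem_ker, hφ, Prod.mk_eq_zero] at hv
    obtain ⟨h0, h1⟩ : v 0 = 0 ∧ v 1 = 0 := hv
    have hv_eq := ((twistedCycleAdj_sub_mulVec_eq_zero_iff_chebSol hn hε x v).1 ((hK v).1 hvK)).1
    ext j
    simp [hv_eq j, h0, h1, chebSol]
  have hφ_surj : Function.Surjective φ ↔
      ∀ a b, chebSol x a b n = ε * a ∧ chebSol x a b (n + 1) = ε * b := by
    constructor
    · intro h a b
      obtain ⟨⟨v, hvK⟩, hv⟩ := h (a, b)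
      rw [hφ, Prod.mk.injEq] at hv
      obtain ⟨rfl, rfl⟩ := hv
      exact ((twistedCycleAdj_sub_mulVec_eq_zero_iff_chebSol hn hε x v).1 ((hK v).1 hvK)).2
    · intro h ⟨a, b⟩
      let v : Fin n → ℝ := fun j => chebSol x a b j
      have hv0 : v 0 = a := by simp [v]
      have hv1 : v 1 = b := by simp [v, Nat.mod_eq_of_lt (by omega : 1 < n)]
      have hvK : v ∈ K := by
        rw [hK, twistedCycleAdj_sub_mulVec_eq_zero_iff_chebSol hn hε, hv0, hv1]
        exact ⟨fun j => rfl, h a b⟩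
      exact ⟨⟨v, hvK⟩, Prod.ext hv0 hv1⟩
  have hfin : Module.finrank ℝ (ℝ × ℝ) = 2 := by simp
  rw [← hφ_surj, ← LinearMap.finrank_eq_iff_surjective_of_injective hφ_inj, hfin]

theorem nuCount_twistedCycleAdj (hn : 2 ≤ n) {ε : ℝ} (hε : ε * ε = 1) :
    nuCount (twistedCycleAdj n ε) = #{m ∈ Ico 1 n | (-1) ^ m = ε} := by
  have hspec :
      {x : ℝ | Module.finrank ℝ (LinearMap.ker (toLin' (twistedCycleAdj n ε - x • 1))) = 2} =
        (image (fun m : ℕ => 2 * cos (m * π / n)) {m ∈ Ico 1 n | (-1) ^ m = ε} : Set ℝ) := by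
    ext x
    simp [finrank_ker_twistedCycleAdj_sub_eq_two_iff hn hε, forall_chebSol_twisted_iff,
      eval_S_pred_eq_zero_and_eval_S_eq_iff (by omega : 0 < n), and_assoc]
  rw [nuCount, hspec, Set.ncard_coe_finset, card_image_of_injOn
    ((injOn_two_mul_cos_pi_div n).mono (coe_subset.2 (filter_subset _ _)))]

end

section
variable {n : ℕ} [NeZero n] {z : (Fin n → ℝ) × (Fin n → ℝ)}

theorem bfun_eq_one (hq : ∀ i j : Fin n, z.1 i = z.1 j) (j : Fin n) : bfun z j = 1 := by
  rw [bfun, hq j (j + 1), sub_self, zero_div, Real.exp_zero]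

theorem Lax_eq_twistedCycleAdj (hq : ∀ i j : Fin n, z.1 i = z.1 j)
    (hp : ∀ i j : Fin n, z.2 i = z.2 j) : Lax z = twistedCycleAdj n 1 + z.2 0 • 1 := by
  ext r s
  simp only [Lax, twistedCycleAdj, cycleWeight, bfun_eq_one hq, hp r 0, ite_self,
    Matrix.add_apply, Matrix.smul_apply, one_apply, smul_eq_mul, mul_ite, mul_one, mul_zero]
  ring

theorem LaxBar_eq_twistedCycleAdj (hq : ∀ i j : Fin n, z.1 i = z.1 j)
    (hp : ∀ i j : Fin n, z.2 i = z.2 j) : LaxBar z = twistedCycleAdj n (-1) + z.2 0 • 1 := by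
  ext r s
  simp only [LaxBar, twistedCycleAdj, cycleWeight, sgn, bfun_eq_one hq, hp r 0,
    Matrix.add_apply, Matrix.smul_apply, one_apply, smul_eq_mul, mul_ite, mul_one, mul_zero]
  ring

end

/-- at an equal-position, equal-momentum point, L has exactly
⌊(n−1)/2⌋ doubly degenerate eigenvalues and L̄ exactly ⌊n/2⌋, summing to n−1. -/
theorem stmt11 (n : ℕ) [NeZero n] (hn : 2 ≤ n) (z : (Fin n → ℝ) × (Fin n → ℝ))
    (hq : ∀ i j : Fin n, z.1 i = z.1 j) (hp : ∀ i j : Fin n, z.2 i = z.2 j) :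
    nuCount (Lax z) = (n - 1) / 2 ∧ nuCount (LaxBar z) = n / 2 ∧
    nuCount (Lax z) + nuCount (LaxBar z) = n - 1 := by
  have hL : nuCount (Lax z) = (n - 1) / 2 := by
    rw [Lax_eq_twistedCycleAdj hq hp, nuCount_add_smul_one,
      nuCount_twistedCycleAdj hn (by norm_num)]
    simp_rw [neg_one_pow_eq_one_iff_even (by norm_num : (-1 : ℝ) ≠ 1)]
    exact card_filter_even_Ico_one n
  have hLbar : nuCount (LaxBar z) = n / 2 := by
    rw [LaxBar_eq_twistedCycleAdj hq hp, nuCount_add_smul_one,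
      nuCount_twistedCycleAdj hn (by norm_num)]
    simp_rw [neg_one_pow_eq_neg_one_iff_odd (by norm_num : (-1 : ℝ) ≠ 1)]
    exact card_filter_odd_Ico_one n
  exact ⟨hL, hLbar, by omega⟩
end

section
/- For every phase-space point z ∈ ℝ^{2n}, let λ_1 ≥ λ_2 ≥ ⋯ ≥ λ_n be the eigenvalues of L(z) listed with multiplicity in decreasing order, and let λ̄_1 ≥ λ̄_2 ≥ ⋯ ≥ λ̄_n be those of L̄(z). Then λ_r > λ̄_r for every odd index r, and λ̄_r > λ_r for every even index r. Consequently, λ_r = λ_{r+1} is possible only when r is even, and λ̄_r = λ̄_{r+1} is possible only when r is odd. -/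
/-!
Let `L₀` be `L` with the boundary bond `b_n` removed (the open Toda chain) and `S = E₁ₙ + Eₙ₁`,
so that `L = L₀ + b_n S` and `L̄ = L₀ - b_n S`. Expanding `det (X - L₀ ∓ b_n S)` in rows `1`
and `n`, the terms even in `b_n` cancel, and the `(1, n)` cofactor of `X - L₀` is a triangular
determinant equal to `b_1 ⋯ b_{n-1}`; hence `χ_{L̄} = χ_L + 4 b_1 ⋯ b_n` with a positive constant.

So `χ_L` and `χ_{L̄}` have the same derivative, and by Rolle the numbers of eigenvalues of `L`
and of `L̄` above a point `x` that is an eigenvalue of neither differ by at most one. If the count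
for `L` is even then `χ_L(x) > 0`, so `χ_{L̄}(x) > 0` and the count for `L̄` is even too. Taking
`x` strictly between `λ_r` and `λ̄_r` (which never coincide) forces the order of the two
according to the parity of `r`.
-/

open Matrix BigOperators

open Polynomial Finset

namespace Matrix

variable {ι R : Type*} [Fintype ι] [DecidableEq ι] [CommRing R]

theorem det_updateRow_add_smul (N : Matrix ι ι R) (i : ι) (u : R) (v : ι → R) :
    det (N.updateRow i (N i + u • v)) = det N + u * det (N.updateRow i v) := by
  rw [det_updateRow_add, det_updateRow_smul, updateRow_eq_self]

theorem det_add_smul_single_add_single (N : Matrix ι ι R) {i j : ι} (hij : i ≠ j) (u : R) :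
    det (N + u • (single i j 1 + single j i 1)) =
      det N + u * (adjugate N j i + adjugate N i j) +
        u ^ 2 * det ((N.updateRow i (Pi.single j 1)).updateRow j (Pi.single i 1)) := by
  have hA : N + u • (single i j 1 + single j i 1) =
      (N.updateRow i (N i + u • Pi.single j 1)).updateRow j (N j + u • Pi.single i 1) := by
    ext r s
    simp only [updateRow_apply, add_apply, smul_apply, single_apply, Pi.single_apply,
      Pi.add_apply, Pi.smul_apply, smul_eq_mul]
    grind
  have hi : N i = (N.updateRow j (Pi.single i 1)) i := (updateRow_ne hij).symm
  have hj : N j = (N.updateRow i (N i + u • Pi.single j 1)) j := (updateRow_ne hij.symm).symm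
  rw [hA, hj, det_updateRow_add_smul, det_updateRow_add_smul, updateRow_comm _ hij, hi,
    det_updateRow_add_smul, adjugate_apply, adjugate_apply, updateRow_comm _ hij.symm]
  ring

theorem det_add_smul_sub_det_sub_smul {N : Matrix ι ι R} (hN : N.IsSymm) {i j : ι} (hij : i ≠ j)
    (u : R) :
    det (N + u • (single i j 1 + single j i 1)) - det (N - u • (single i j 1 + single j i 1)) =
      4 * u * adjugate N i j := by
  rw [sub_eq_add_neg N, ← neg_smul, det_add_smul_single_add_single N hij,
    det_add_smul_single_add_single N hij, hN.adjugate.apply j i]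
  ring

theorem charmatrix_add_smul_single_add_single (A : Matrix ι ι R) (i j : ι) (t : R) :
    charmatrix (A + t • (single i j 1 + single j i 1)) =
      charmatrix A - C t • (single i j 1 + single j i 1) := by
  refine Matrix.ext fun r s => ?_
  simp only [charmatrix_apply, Matrix.add_apply, Matrix.sub_apply, Matrix.smul_apply,
    single_apply, smul_eq_mul, map_add, map_mul, apply_ite C, map_one, map_zero]
  ring

theorem det_updateRow_last_single_zero {m : ℕ} (M : Matrix (Fin (m + 2)) (Fin (m + 2)) R)
    (hM : ∀ i j : Fin (m + 1), i < j → M i.castSucc j.succ = 0) :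
    det (M.updateRow (Fin.last _) (Pi.single 0 1)) =
      (-1) ^ (m + 1) * ∏ i : Fin (m + 1), M i.castSucc i.succ := by
  rw [det_succ_row _ (Fin.last _), Fintype.sum_eq_single 0 fun j hj => by simp [hj]]
  have hminor : (M.updateRow (Fin.last _) (Pi.single 0 1)).submatrix
      (Fin.last _).succAbove (Fin.succAbove 0) = M.submatrix Fin.castSucc Fin.succ := by
    ext i j
    simp
  rw [hminor, det_of_isLowerTriangular (M.submatrix _ _) fun i j hij => hM i j hij]
  simp

end Matrix

-- The condition `r.val + 1 = s.val`, unlike `r + 1 = s` in `Lax`, excludes the wrap-around.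
noncomputable def openLax {n : ℕ} [NeZero n] (z : (Fin n → ℝ) × (Fin n → ℝ)) :
    Matrix (Fin n) (Fin n) ℝ := fun r s =>
  (if r = s then z.2 r else 0) + (if r.val + 1 = s.val then bfun z r else 0) +
    (if s.val + 1 = r.val then bfun z s else 0)

theorem openLax_isSymm {n : ℕ} [NeZero n] (z : (Fin n → ℝ) × (Fin n → ℝ)) :
    (openLax z).IsSymm := by
  ext r s
  simp only [transpose_apply, openLax]
  grind

theorem openLax_apply_eq_zero {n : ℕ} [NeZero n] (z : (Fin n → ℝ) × (Fin n → ℝ)) {r s : Fin n}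
    (h : r.val + 1 < s.val) : openLax z r s = 0 := by
  simp only [openLax]
  rw [if_neg (by omega), if_neg (by omega), if_neg (by omega)]
  ring

theorem Fin.add_one_eq_iff {n : ℕ} {r s : Fin (n + 1)} :
    r + 1 = s ↔ r.val + 1 = s.val ∨ (r = Fin.last _ ∧ s = 0) := by
  rw [Fin.ext_iff, Fin.val_add_one]
  have hs := s.isLt
  split_ifs with h
  · simp only [h, Fin.val_last, true_and, Fin.ext_iff, Fin.val_zero]
    omega
  · simp only [h, false_and, or_false]

section

variable {m : ℕ} (z : (Fin (m + 2) → ℝ) × (Fin (m + 2) → ℝ))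

theorem lax_eq_openLax_add :
    Lax z = openLax z +
      bfun z (Fin.last _) • (single 0 (Fin.last _) 1 + single (Fin.last _) 0 1) := by
  ext r s
  simp only [Lax, openLax, Matrix.add_apply, Matrix.smul_apply, single_apply, smul_eq_mul,
    Fin.add_one_eq_iff]
  grind

theorem laxBar_eq_openLax_sub :
    LaxBar z = openLax z -
      bfun z (Fin.last _) • (single 0 (Fin.last _) 1 + single (Fin.last _) 0 1) := by
  ext r s
  simp only [LaxBar, sgn, openLax, Matrix.sub_apply, Matrix.add_apply, Matrix.smul_apply,
    single_apply, smul_eq_mul, Fin.add_one_eq_iff]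
  grind

theorem adjugate_charmatrix_openLax :
    adjugate (charmatrix (openLax z)) 0 (Fin.last _) =
      C (∏ i : Fin (m + 1), bfun z i.castSucc) := by
  have hsuperdiag (i : Fin (m + 1)) :
      charmatrix (openLax z) i.castSucc i.succ = -C (bfun z i.castSucc) := by
    have hi : i.castSucc.val + 1 = i.succ.val := rfl
    rw [charmatrix_apply, diagonal_apply_ne _ i.castSucc_lt_succ.ne, openLax,
      if_neg i.castSucc_lt_succ.ne, if_pos hi, if_neg (by omega)]
    simp
  rw [adjugate_apply, det_updateRow_last_single_zero]
  · simp_rw [hsuperdiag, Finset.prod_neg, Finset.card_univ, Fintype.card_fin, ← map_prod,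
      ← mul_assoc, ← mul_pow, neg_one_mul, neg_neg, one_pow, one_mul]
  · intro i j hij
    rw [charmatrix_apply, diagonal_apply_ne _ (Fin.castSucc_lt_succ_iff.mpr hij.le).ne,
      openLax_apply_eq_zero z (by simpa using Fin.lt_def.mp hij)]
    simp

theorem charpoly_laxBar :
    (LaxBar z).charpoly = (Lax z).charpoly + C (4 * ∏ j, bfun z j) := by
  have hN : (charmatrix (openLax z)).IsSymm := by
    rw [IsSymm, ← charmatrix_transpose, openLax_isSymm z]
  have hdiff := det_add_smul_sub_det_sub_smul hN (Fin.last_pos.ne) (C (bfun z (Fin.last _)))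
  rw [charpoly, charpoly, laxBar_eq_openLax_sub, lax_eq_openLax_add, sub_eq_add_neg, ← neg_smul,
    charmatrix_add_smul_single_add_single, charmatrix_add_smul_single_add_single, map_neg,
    neg_smul, sub_neg_eq_add, ← sub_eq_iff_eq_add', hdiff, adjugate_charmatrix_openLax,
    Fin.prod_univ_castSucc (bfun z)]
  simp only [map_mul, map_ofNat]
  ring

end

namespace Polynomial

variable {s : Set ℝ} [DecidablePred (· ∈ s)]

theorem card_toFinset_filter_roots_le_derivative_sdiff_succ (p : ℝ[X]) (hs : s.OrdConnected) :
    (p.roots.filter (· ∈ s)).toFinset.card ≤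
      (((derivative p).roots.filter (· ∈ s)).toFinset \ (p.roots.filter (· ∈ s)).toFinset).card
        + 1 := by
  rcases eq_or_ne (derivative p) 0 with hp' | hp'
  · rw [eq_C_of_derivative_eq_zero hp', roots_C]
    simp
  have hp : p ≠ 0 := ne_of_apply_ne derivative (by rwa [derivative_zero])
  refine Finset.card_le_sdiff_of_interleaved fun x hx y hy hxy _ => ?_
  simp only [Multiset.mem_toFinset, Multiset.mem_filter, mem_roots hp] at hx hy
  obtain ⟨z, hz, hz'⟩ := exists_deriv_eq_zero hxy p.continuousOn (hx.1.trans hy.1.symm)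
  refine ⟨z, ?_, hz⟩
  rw [Multiset.mem_toFinset, Multiset.mem_filter, mem_roots hp', IsRoot, ← p.deriv]
  exact ⟨hz', hs.out hx.2 hy.2 (Set.Ioo_subset_Icc_self hz)⟩

theorem card_filter_roots_le_derivative (p : ℝ[X]) (hs : s.OrdConnected) :
    Multiset.card (p.roots.filter (· ∈ s)) ≤
      Multiset.card ((derivative p).roots.filter (· ∈ s)) + 1 := by
  set q := p.roots.filter (· ∈ s)
  set q' := (derivative p).roots.filter (· ∈ s)
  have hq (x) (hx : x ∈ q.toFinset) : q.count x = p.rootMultiplicity x := by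
    rw [Multiset.mem_toFinset, Multiset.mem_filter] at hx
    rw [Multiset.count_filter_of_pos hx.2, count_roots]
  have hq' (x) (hx : x ∈ q.toFinset) : q'.count x = (derivative p).rootMultiplicity x := by
    rw [Multiset.mem_toFinset, Multiset.mem_filter] at hx
    rw [Multiset.count_filter_of_pos hx.2, count_roots]
  calc
    Multiset.card q = ∑ x ∈ q.toFinset, q.count x := (Multiset.toFinset_sum_count_eq _).symm
    _ = ∑ x ∈ q.toFinset, (p.rootMultiplicity x - 1 + 1) := by
      refine Finset.sum_congr rfl fun x hx => ?_
      rw [← hq x hx, tsub_add_cancel_of_le]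
      exact Multiset.count_pos.2 (Multiset.mem_toFinset.1 hx)
    _ = (∑ x ∈ q.toFinset, (p.rootMultiplicity x - 1)) + q.toFinset.card := by
      simp only [Finset.sum_add_distrib, Finset.card_eq_sum_ones]
    _ ≤ (∑ x ∈ q.toFinset, q'.count x) + ((q'.toFinset \ q.toFinset).card + 1) := by
      gcongr with x hx
      · rw [hq' x hx]
        exact rootMultiplicity_sub_one_le_derivative_rootMultiplicity _ _
      · exact card_toFinset_filter_roots_le_derivative_sdiff_succ p hs
    _ ≤ (∑ x ∈ q.toFinset, q'.count x) +
          ((∑ x ∈ q'.toFinset \ q.toFinset, q'.count x) + 1) := by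
      simp only [Finset.card_eq_sum_ones]
      gcongr with x hx
      rw [Nat.succ_le_iff, Multiset.count_pos, ← Multiset.mem_toFinset]
      exact (Finset.mem_sdiff.1 hx).1
    _ = Multiset.card q' + 1 := by
      rw [← add_assoc, ← Finset.sum_union Finset.disjoint_sdiff, Finset.union_sdiff_self_eq_union, ←
        Multiset.toFinset_sum_count_eq, ← Finset.sum_subset Finset.subset_union_right]
      intro x _ hx₂
      simpa only [Multiset.mem_toFinset, Multiset.count_eq_zero] using hx₂

theorem card_filter_roots_Ioi_le_of_derivative_eq {p q : ℝ[X]} (hd : derivative p = derivative q)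
    (hq : Multiset.card q.roots = q.natDegree) {x : ℝ} (hx : x ∉ q.roots) :
    Multiset.card (p.roots.filter (· ∈ Set.Ioi x)) ≤
      Multiset.card (q.roots.filter (· ∈ Set.Ioi x)) + 1 := by
  have hp := card_filter_roots_le_derivative p (Set.ordConnected_Ioi (a := x))
  have hq' := card_filter_roots_le_derivative q (Set.ordConnected_Iio (a := x))
  rw [hd] at hp
  have hD : Multiset.card ((derivative q).roots.filter (· ∈ Set.Ioi x)) +
      Multiset.card ((derivative q).roots.filter (· ∈ Set.Iio x)) ≤ q.natDegree - 1 :=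
    calc _ ≤ Multiset.card ((derivative q).roots.filter (· ∈ Set.Ioi x)) +
          Multiset.card ((derivative q).roots.filter (· ∉ Set.Ioi x)) := by
          gcongr
          exact Multiset.monotone_filter_right _ fun y (hy : y < x) => hy.le.not_gt
      _ = Multiset.card (derivative q).roots := by
          rw [← Multiset.card_add, Multiset.filter_add_not]
      _ ≤ (derivative q).natDegree := card_roots' _
      _ ≤ q.natDegree - 1 := natDegree_derivative_le q
  have hqx : Multiset.card (q.roots.filter (· ∈ Set.Ioi x)) +
      Multiset.card (q.roots.filter (· ∈ Set.Iio x)) = q.natDegree := by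
    have hIio : q.roots.filter (· ∈ Set.Iio x) = q.roots.filter (· ∉ Set.Ioi x) :=
      Multiset.filter_congr fun y hy =>
        ⟨fun (hyx : y < x) => hyx.le.not_gt,
          fun hyx => (not_lt.1 hyx).lt_of_ne (ne_of_mem_of_not_mem hy hx)⟩
    rw [hIio, ← Multiset.card_add, Multiset.filter_add_not, hq]
  omega

end Polynomial

section Interlacing

variable {n : ℕ} {lam mu : Fin n → ℝ}

theorem roots_prod_X_sub_C_fin (lam : Fin n → ℝ) :
    (∏ i, (X - C (lam i))).roots = univ.val.map lam := by
  rw [roots_prod _ _ (prod_ne_zero_iff.mpr fun i _ => X_sub_C_ne_zero (lam i))]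
  simp [roots_X_sub_C, Multiset.bind_singleton]

theorem card_lt_le_card_lt_add_one_of_derivative_eq
    (hd : derivative (∏ i, (X - C (lam i))) = derivative (∏ i, (X - C (mu i))))
    {x : ℝ} (hx : ∀ i, mu i ≠ x) :
    #{i | x < lam i} ≤ #{i | x < mu i} + 1 := by
  have hcard (a : Fin n → ℝ) :
      Multiset.card ((∏ i, (X - C (a i))).roots.filter (· ∈ Set.Ioi x)) = #{i | x < a i} := by
    rw [roots_prod_X_sub_C_fin, Multiset.filter_map, Multiset.card_map]
    rfl
  rw [← hcard, ← hcard]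
  refine card_filter_roots_Ioi_le_of_derivative_eq hd ?_ ?_
  · rw [roots_prod_X_sub_C_fin, natDegree_finsetProd_X_sub_C_eq_card]
    simp
  · simpa [roots_prod_X_sub_C_fin] using hx

theorem eval_prod_X_sub_C_pos_iff {x : ℝ} (hx : ∀ i, lam i ≠ x) :
    0 < (∏ i, (X - C (lam i))).eval x ↔ Even #{i | x < lam i} := by
  have habove : 0 < ∏ i with x < lam i, (lam i - x) :=
    prod_pos fun i hi => sub_pos.2 (mem_filter.1 hi).2
  have hbelow : 0 < ∏ i with ¬x < lam i, (x - lam i) :=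
    prod_pos fun i hi => sub_pos.2 ((not_lt.1 (mem_filter.1 hi).2).lt_of_ne (hx i))
  have heval : (∏ i, (X - C (lam i))).eval x = (-1) ^ #{i | x < lam i} *
      ((∏ i with x < lam i, (lam i - x)) * ∏ i with ¬x < lam i, (x - lam i)) := by
    rw [eval_prod, ← prod_filter_mul_prod_filter_not univ (fun i => x < lam i), ← mul_assoc,
      ← prod_neg]
    simp
  rw [heval]
  rcases Nat.even_or_odd #{i | x < lam i} with h | h
  · rw [h.neg_one_pow, one_mul]
    exact iff_of_true (mul_pos habove hbelow) h
  · rw [h.neg_one_pow, neg_one_mul, neg_pos]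
    exact iff_of_false (mul_pos habove hbelow).not_gt (Nat.not_even_iff_odd.2 h)

theorem card_filter_lt_le_of_antitone (ha : Antitone lam) {r : Fin n} {x : ℝ} (hx : lam r < x) :
    #{i | x < lam i} ≤ r.val :=
  calc #{i | x < lam i} ≤ #(Iio r) := card_le_card fun _ hi =>
        mem_Iio.2 (lt_of_not_ge fun hri => ((ha hri).trans_lt hx).not_gt (mem_filter.1 hi).2)
    _ = r.val := Fin.card_Iio r

theorem lt_card_filter_lt_of_antitone (ha : Antitone lam) {r : Fin n} {x : ℝ} (hx : x < lam r) :
    r.val < #{i | x < lam i} :=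
  calc r.val < #(Iic r) := by rw [Fin.card_Iic]; omega
    _ ≤ #{i | x < lam i} := card_le_card fun _ hi =>
        mem_filter.2 ⟨mem_univ _, hx.trans_le (ha (mem_Iic.1 hi))⟩

variable {c : ℝ} (hc : 0 < c) (h : ∏ i, (X - C (mu i)) = ∏ i, (X - C (lam i)) + C c)
include hc h

theorem even_card_lt_of_even_of_eq_add_C {x : ℝ} (hxl : ∀ i, lam i ≠ x) (hxm : ∀ i, mu i ≠ x)
    (he : Even #{i | x < lam i}) : Even #{i | x < mu i} := by
  rw [← eval_prod_X_sub_C_pos_iff hxm, h, eval_add, eval_C]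
  linarith [(eval_prod_X_sub_C_pos_iff hxl).2 he]

theorem interlacing_of_prod_X_sub_C_eq_add_C (hlam : Antitone lam) (hmu : Antitone mu) (r : Fin n) :
    (Even r.val → mu r < lam r) ∧ (Odd r.val → lam r < mu r) := by
  have hd : derivative (∏ i, (X - C (mu i))) = derivative (∏ i, (X - C (lam i))) := by
    rw [h, derivative_add, derivative_C, add_zero]
  have hne : lam r ≠ mu r := by
    intro heq
    have := congrArg (eval (lam r)) h
    simp only [eval_add, eval_C, eval_prod, eval_sub, eval_X] at this
    rw [prod_eq_zero (mem_univ r) (by rw [heq, sub_self]), prod_eq_zero (mem_univ r) (sub_self _)]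
      at this
    linarith
  have hpick {a b : ℝ} (hab : a < b) : ∃ x, a < x ∧ x < b ∧ (∀ i, lam i ≠ x) ∧ ∀ i, mu i ≠ x := by
    obtain ⟨x, ⟨hax, hxb⟩, hx⟩ :=
      ((Set.Ioo_infinite hab).sdiff ((Set.finite_range lam).union (Set.finite_range mu))).nonempty
    simp only [Set.mem_union, Set.mem_range, not_or, not_exists] at hx
    exact ⟨x, hax, hxb, hx⟩
  rcases hne.lt_or_gt with hlt | hgt
  · obtain ⟨x, hlx, hxm, hxl', hxm'⟩ := hpick hlt
    refine ⟨fun hr => ?_, fun _ => hlt⟩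
    have h1 := card_filter_lt_le_of_antitone hlam hlx
    have h2 := lt_card_filter_lt_of_antitone hmu hxm
    have h3 := card_lt_le_card_lt_add_one_of_derivative_eq hd hxl'
    have hk : #{i | x < lam i} = r := by omega
    have := even_card_lt_of_even_of_eq_add_C hc h hxl' hxm' (hk ▸ hr)
    rw [Nat.even_iff] at this hr
    omega
  · obtain ⟨x, hmx, hxl, hxl', hxm'⟩ := hpick hgt
    refine ⟨fun _ => hgt, fun hr => ?_⟩
    have h1 := card_filter_lt_le_of_antitone hmu hmx
    have h2 := lt_card_filter_lt_of_antitone hlam hxl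
    have h3 := card_lt_le_card_lt_add_one_of_derivative_eq hd.symm hxm'
    have hk : #{i | x < lam i} = r + 1 := by omega
    have := even_card_lt_of_even_of_eq_add_C hc h hxl' hxm' (hk ▸ hr.add_one)
    rw [Nat.even_iff] at this
    rw [Nat.odd_iff] at hr
    omega

end Interlacing

-- Indices are 0-based: the paper's odd `r` is an even `r.val` here.
/-- interlacing of the (decreasingly ordered, with multiplicity)
eigenvalues of L and L̄.  Here 0-indexed: 1-indexed odd r ↔ r.val even.  The
eigenvalue lists are encoded by the characteristic polynomial factorisations
together with antitonicity. -/
theorem stmt13 (n : ℕ) [NeZero n] (hn : 2 ≤ n) (z : (Fin n → ℝ) × (Fin n → ℝ))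
    (lam lamBar : Fin n → ℝ) (hmono : Antitone lam) (hmonoBar : Antitone lamBar)
    (hchar : (Lax z).charpoly = ∏ i : Fin n, (Polynomial.X - Polynomial.C (lam i)))
    (hcharBar : (LaxBar z).charpoly =
      ∏ i : Fin n, (Polynomial.X - Polynomial.C (lamBar i))) :
    (∀ r : Fin n, r.val % 2 = 0 → lam r > lamBar r) ∧
    (∀ r : Fin n, r.val % 2 = 1 → lamBar r > lam r) ∧
    (∀ r s : Fin n, r.val + 1 = s.val → lam r = lam s → r.val % 2 = 1) ∧
    (∀ r s : Fin n, r.val + 1 = s.val → lamBar r = lamBar s → r.val % 2 = 0) := by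
  obtain ⟨m, rfl⟩ : ∃ m, n = m + 2 := ⟨n - 2, by omega⟩
  have hc : 0 < 4 * ∏ j, bfun z j := mul_pos four_pos (prod_pos fun j _ => Real.exp_pos _)
  have key := interlacing_of_prod_X_sub_C_eq_add_C hc
    (by rw [← hchar, ← hcharBar, charpoly_laxBar]) hmono hmonoBar
  refine ⟨fun r hr => (key r).1 (Nat.even_iff.2 hr), fun r hr => (key r).2 (Nat.odd_iff.2 hr),
    fun r s hrs heq => ?_, fun r s hrs heq => ?_⟩
  all_goals
    have hrs' : r ≤ s := Fin.le_def.2 (by omega)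
    rcases Nat.even_or_odd r.val with hr | hr
  · have hs : Odd s.val := hrs ▸ hr.add_one
    linarith [(key r).1 hr, (key s).2 hs, hmonoBar hrs']
  · exact Nat.odd_iff.1 hr
  · exact Nat.even_iff.1 hr
  · have hs : Even s.val := hrs ▸ hr.add_one
    linarith [(key r).2 hr, (key s).1 hs, hmono hrs']
end
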